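/- arXiv:2210.06402 — 7 statements merged into one kernel-verified Lean document; each statement's English description precedes it below -/
import Mathlib

section
/- Fix q with 1 < q < 2 and a relaxation interval ε = [ε₋, ε₊] with 0 < ε₋ ≤ ε₊ < ∞. For every t ≥ 0, the function a ↦ (1/2)a^{q-2}t² + (1/q - 1/2)a^q attains its minimum over the interval [ε₋, ε₊] at the unique point a = clamp_ε(t) = max(ε₋, min(t, ε₊)), and the minimal value equals κ*_ε(t). -/
/-!
The derivative of `a ↦ (1/2) a^(q-2) t² + (1/q - 1/2) a^q` is `(1 - q/2) a^(q-3) (a² - t²)`, so for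
`q < 2` the function strictly decreases on `(0, t]` and strictly increases on `[t, ∞)`. Its unique
minimiser on `[ε₋, ε₊]` is therefore the projection `clamp_ε(t)` of `t` onto the interval, and the
value there is the branch of `κ*_ε` selected by the position of `t`.
-/

open Real

/-- The relaxed integrand `κ*_ε`. -/
noncomputable def kappaStar (q em ep t : ℝ) : ℝ :=
  if t ≤ em then (1/2) * em ^ (q-2) * t^2 + (1/q - 1/2) * em ^ q
  else if t ≤ ep then (1/q) * t ^ q
  else (1/2) * ep ^ (q-2) * t^2 + (1/q - 1/2) * ep ^ q

noncomputable def relaxedEnergy (q t a : ℝ) : ℝ :=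
  (1/2) * a ^ (q-2) * t^2 + (1/q - 1/2) * a ^ q

lemma rpow_sub_two_mul_sq {a : ℝ} (ha : a ≠ 0) (p : ℝ) : a ^ (p - 2) * a ^ 2 = a ^ p := by
  rw [← rpow_add_natCast ha]
  norm_num

lemma hasDerivAt_relaxedEnergy {q : ℝ} (hq0 : q ≠ 0) (t : ℝ) {a : ℝ} (ha : 0 < a) :
    HasDerivAt (relaxedEnergy q t) ((1 - q/2) * a ^ (q-3) * (a^2 - t^2)) a := by
  have hsq := ((hasDerivAt_rpow_const (p := q-2) (Or.inl ha.ne')).const_mul (1/2 : ℝ)).mul_const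
    (t^2)
  have hpow := (hasDerivAt_rpow_const (p := q) (Or.inl ha.ne')).const_mul (1/q - 1/2)
  refine (hsq.add hpow).congr_deriv ?_
  have hpow_sub : a ^ (q - 3) * a ^ 2 = a ^ (q - 1) := by
    rw [← rpow_sub_two_mul_sq ha.ne' (q - 1)]; ring_nf
  rw [show q - 2 - 1 = q - 3 by ring, ← hpow_sub]
  field_simp
  ring

lemma strictAntiOn_relaxedEnergy {q : ℝ} (hq0 : q ≠ 0) (hq2 : q < 2) (t : ℝ) :
    StrictAntiOn (relaxedEnergy q t) (Set.Ioc 0 t) := by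
  apply strictAntiOn_of_deriv_neg (convex_Ioc 0 t)
  · exact fun a ha => (hasDerivAt_relaxedEnergy hq0 t ha.1).continuousAt.continuousWithinAt
  · intro a ha
    rw [interior_Ioc] at ha
    rw [(hasDerivAt_relaxedEnergy hq0 t ha.1).deriv]
    have : a ^ 2 < t ^ 2 := by nlinarith [ha.1, ha.2]
    exact mul_neg_of_pos_of_neg (mul_pos (by linarith) (rpow_pos_of_pos ha.1 _)) (by linarith)

lemma strictMonoOn_relaxedEnergy {q : ℝ} (hq0 : q ≠ 0) (hq2 : q < 2) {t : ℝ} (ht : 0 ≤ t) :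
    StrictMonoOn (relaxedEnergy q t) (Set.Ioi 0 ∩ Set.Ici t) := by
  apply strictMonoOn_of_deriv_pos ((convex_Ioi 0).inter (convex_Ici t))
  · exact fun a ha => (hasDerivAt_relaxedEnergy hq0 t ha.1).continuousAt.continuousWithinAt
  · intro a ha
    rw [interior_inter, interior_Ioi, interior_Ici] at ha
    rw [(hasDerivAt_relaxedEnergy hq0 t ha.1).deriv]
    have : t ^ 2 < a ^ 2 := by nlinarith [Set.mem_Ioi.1 ha.1, Set.mem_Ioi.1 ha.2]
    exact mul_pos (mul_pos (by linarith) (rpow_pos_of_pos ha.1 _)) (by linarith)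

lemma apply_clamp_lt_of_ne {f : ℝ → ℝ} {l u t : ℝ}
    (hanti : StrictAntiOn f (Set.Icc l u ∩ Set.Iic t))
    (hmono : StrictMonoOn f (Set.Icc l u ∩ Set.Ici t))
    {a : ℝ} (ha : a ∈ Set.Icc l u) (hne : a ≠ max l (min t u)) :
    f (max l (min t u)) < f a := by
  set c := max l (min t u)
  rcases hne.lt_or_gt with hac | hca
  · have hct : c ≤ t := by grind
    exact hanti ⟨ha, hac.le.trans hct⟩ ⟨⟨by grind, by grind⟩, hct⟩ hac
  · have htc : t ≤ c := by grind
    exact hmono ⟨⟨by grind, by grind⟩, htc⟩ ⟨ha, htc.trans hca.le⟩ hca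

lemma relaxedEnergy_clamp {q em ep t : ℝ} (hem : 0 < em) (hemep : em ≤ ep) :
    relaxedEnergy q t (max em (min t ep)) = kappaStar q em ep t := by
  unfold kappaStar relaxedEnergy
  split_ifs with htm htp
  · rw [min_eq_left (htm.trans hemep), max_eq_left htm]
  · rw [min_eq_left htp, max_eq_right (le_of_not_ge htm), mul_assoc,
      rpow_sub_two_mul_sq (by linarith [le_of_not_ge htm])]
    ring
  · rw [min_eq_right (le_of_not_ge htp), max_eq_right hemep]

/-- For `1 < q < 2`, `0 < ε₋ ≤ ε₊ < ∞` and `t ≥ 0`, the function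
`a ↦ (1/2) a^(q-2) t² + (1/q - 1/2) a^q` attains its minimum over `[ε₋, ε₊]` at the unique
point `a = clamp_ε(t) = max(ε₋, min(t, ε₊))`, and the minimal value equals `κ*_ε(t)`. -/
theorem stmt1 (q em ep : ℝ) (hq1 : 1 < q) (hq2 : q < 2) (hem : 0 < em) (hemep : em ≤ ep)
    (t : ℝ) (ht : 0 ≤ t) :
    (∀ a ∈ Set.Icc em ep,
      (1/2) * (max em (min t ep)) ^ (q-2) * t^2 + (1/q - 1/2) * (max em (min t ep)) ^ q
        ≤ (1/2) * a ^ (q-2) * t^2 + (1/q - 1/2) * a ^ q) ∧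
    (∀ a ∈ Set.Icc em ep,
      (1/2) * a ^ (q-2) * t^2 + (1/q - 1/2) * a ^ q
        = (1/2) * (max em (min t ep)) ^ (q-2) * t^2 + (1/q - 1/2) * (max em (min t ep)) ^ q
      → a = max em (min t ep)) ∧
    (1/2) * (max em (min t ep)) ^ (q-2) * t^2 + (1/q - 1/2) * (max em (min t ep)) ^ q
      = kappaStar q em ep t := by
  have hq0 : q ≠ 0 := by linarith
  have hlt : ∀ a ∈ Set.Icc em ep, a ≠ max em (min t ep) →
      relaxedEnergy q t (max em (min t ep)) < relaxedEnergy q t a :=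
    fun a ha => apply_clamp_lt_of_ne
      ((strictAntiOn_relaxedEnergy hq0 hq2 t).mono fun b hb => ⟨hem.trans_le hb.1.1, hb.2⟩)
      ((strictMonoOn_relaxedEnergy hq0 hq2 ht).mono fun b hb => ⟨hem.trans_le hb.1.1, hb.2⟩) ha
  refine ⟨fun a ha => ?_, fun a ha heq => ?_, relaxedEnergy_clamp hem hemep⟩
  · rcases eq_or_ne a (max em (min t ep)) with rfl | hne
    · exact le_rfl
    · exact (hlt a ha hne).le
  · by_contra hne
    exact (hlt a ha hne).ne' heq
end

section
/- Fix q with 1 < q < 2 and a relaxation interval ε = [ε₋, ε₊] with 0 < ε₋ ≤ ε₊ < ∞. For all t ≥ 0 the difference κ*_ε(t) - (1/q)t^q is bounded by ε₋^q/q if t ≤ ε₋, by 0 if ε₋ < t ≤ ε₊, and by ε₊^{q-2} t²/q if t > ε₊. -/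
open Real

/-- For `1 < q < 2` and `0 < ε₋ ≤ ε₊ < ∞`, the difference
`κ*_ε(t) - (1/q) t^q` is bounded by `ε₋^q / q` if `t ≤ ε₋`, by `0` if `ε₋ < t ≤ ε₊`,
and by `ε₊^(q-2) t² / q` if `t > ε₊`. -/
theorem stmt5 (q em ep : ℝ) (hq1 : 1 < q) (hq2 : q < 2) (hem : 0 < em) (hemep : em ≤ ep)
    (t : ℝ) (ht : 0 ≤ t) :
    (t ≤ em → kappaStar q em ep t - (1/q) * t ^ q ≤ em ^ q / q) ∧
    (em < t → t ≤ ep → kappaStar q em ep t - (1/q) * t ^ q ≤ 0) ∧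
    (ep < t → kappaStar q em ep t - (1/q) * t ^ q ≤ ep ^ (q-2) * t^2 / q) := by
  have hq0 : (0:ℝ) < q := by linarith
  have hep : 0 < ep := lt_of_lt_of_le hem hemep
  have htq : 0 ≤ t ^ q := rpow_nonneg ht q
  refine ⟨fun h1 => ?_, fun h1 h2 => ?_, fun h1 => ?_⟩
  · simp only [kappaStar, if_pos h1]
    have hkey : em ^ (q-2) * t^2 ≤ em ^ q := by
      have h2' : t^2 ≤ em^2 := by nlinarith
      have : em ^ (q-2) * em^2 = em ^ q := by
        rw [← rpow_two em, ← rpow_add hem]; ring_nf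
      calc em ^ (q-2) * t^2 ≤ em ^ (q-2) * em^2 := by
            have := rpow_nonneg hem.le (q-2); nlinarith
        _ = em ^ q := this
    have hiq : (1/q - 1/2) * em ^ q + (1/2) * em ^ q = em ^ q / q := by ring
    nlinarith [mul_nonneg (by positivity : (0:ℝ) ≤ 1/q) htq]
  · have h1' : ¬ t ≤ em := not_le.mpr h1
    simp [kappaStar, h1', h2]
  · have h1' : ¬ t ≤ em := not_le.mpr (lt_of_le_of_lt hemep h1)
    have h2' : ¬ t ≤ ep := not_le.mpr h1
    simp only [kappaStar, if_neg h1', if_neg h2']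
    have hkey : ep ^ q ≤ ep ^ (q-2) * t^2 := by
      have h2'' : ep^2 ≤ t^2 := by nlinarith
      have heq : ep ^ (q-2) * ep^2 = ep ^ q := by
        rw [← rpow_two ep, ← rpow_add hep]; ring_nf
      calc ep ^ q = ep ^ (q-2) * ep^2 := heq.symm
        _ ≤ ep ^ (q-2) * t^2 := by
            have := rpow_nonneg hep.le (q-2); nlinarith
    have hq2' : 1/q - 1/2 > 0 := by
      rw [gt_iff_lt, sub_pos, div_lt_div_iff₀ (by norm_num) hq0]; linarith
    have : (1/2) * (ep ^ (q-2) * t^2) + (1/q - 1/2) * (ep ^ (q-2) * t^2)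
        = ep ^ (q-2) * t^2 / q := by ring
    nlinarith [mul_nonneg (by positivity : (0:ℝ) ≤ 1/q) htq]
end

section
/- Fix q with 1 < q < 2, a relaxation interval ε = [ε₋, ε₊] with 0 < ε₋ ≤ ε₊ < ∞, let Ω ⊂ ℝ^d be a measurable set of finite Lebesgue measure |Ω|, and let r ≥ 2 (so in particular r ≥ q). Suppose σ ∈ L^r(Ω; ℝ^d) and σ_ε : Ω → ℝ^d is measurable with J*_ε(σ_ε) ≤ J*_ε(σ) (the minimizing property of σ_ε over the constraint set). Then J*(σ_ε) - J*(σ) ≤ J*_ε(σ_ε) - J*(σ) ≤ (|Ω|/q) ε₋^q + (1/q) ε₊^{-(r-q)} ‖σ‖_{L^r(Ω)}^r. -/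
open Real MeasureTheory

/-- The relaxed dual energy `J*_ε(τ) = ∫_Ω κ*_ε(|τ|) dx`. -/
noncomputable def Jeps (q em ep : ℝ) {d : ℕ} (Ω : Set (EuclideanSpace ℝ (Fin d)))
    (τ : EuclideanSpace ℝ (Fin d) → EuclideanSpace ℝ (Fin d)) : ℝ :=
  ∫ x in Ω, kappaStar q em ep ‖τ x‖

/-- The dual energy `J*(τ) = (1/q) ∫_Ω |τ|^q dx`. -/
noncomputable def Jstar (q : ℝ) {d : ℕ} (Ω : Set (EuclideanSpace ℝ (Fin d)))
    (τ : EuclideanSpace ℝ (Fin d) → EuclideanSpace ℝ (Fin d)) : ℝ :=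
  (1/q) * ∫ x in Ω, ‖τ x‖ ^ q

/-!
Pointwise, `κ*_ε(t)` dominates `t^q / q`: on `[ε₋, ε₊]` they agree, and outside it the quadratic
branch is the weighted AM–GM majorant of `t^q / q` at `s = ε₋` resp. `s = ε₊`. Conversely, the
excess `κ*_ε(t) - t^q / q` is at most `ε₋^q / q` below `ε₋`, vanishes on `[ε₋, ε₊]`, and above `ε₊`
is at most `ε₊^(q-2) t² / q ≤ ε₊^(q-r) t^r / q` because `t / ε₊ ≥ 1` and `r ≥ 2`. Integrating both
bounds (the second one with `r = 2` also shows that `κ*_ε(|σ_ε|)` is integrable) and using the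
minimizing property `J*_ε(σ_ε) ≤ J*_ε(σ)` gives the two inequalities.
-/

section PointwiseBounds

variable {q em ep r s t : ℝ}

lemma one_div_mul_rpow_le_quadratic (hq0 : 0 < q) (hq2 : q ≤ 2) (hs : 0 < s) (ht : 0 ≤ t) :
    1 / q * t ^ q ≤ 1 / 2 * s ^ (q - 2) * t ^ 2 + (1 / q - 1 / 2) * s ^ q := by
  -- weighted AM–GM for `s^(q-2) t²` and `s^q` with weights `q/2` and `1 - q/2`
  have hgeom : (s ^ (q - 2) * t ^ 2) ^ (q / 2) * (s ^ q) ^ (1 - q / 2) = t ^ q := by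
    rw [mul_rpow (by positivity) (by positivity), ← rpow_natCast t 2, ← rpow_mul ht,
      ← rpow_mul hs.le, ← rpow_mul hs.le, mul_right_comm, ← rpow_add hs]
    push_cast
    rw [show (q - 2) * (q / 2) + q * (1 - q / 2) = 0 by ring, rpow_zero, one_mul,
      show (2 : ℝ) * (q / 2) = q by ring]
  have hamgm := geom_mean_le_arith_mean2_weighted (w₁ := q / 2) (w₂ := 1 - q / 2)
    (p₁ := s ^ (q - 2) * t ^ 2) (p₂ := s ^ q) (by linarith) (by linarith) (by positivity)
    (by positivity) (by ring)
  rw [hgeom] at hamgm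
  calc 1 / q * t ^ q ≤ 1 / q * (q / 2 * (s ^ (q - 2) * t ^ 2) + (1 - q / 2) * s ^ q) := by
        gcongr
    _ = 1 / 2 * s ^ (q - 2) * t ^ 2 + (1 / q - 1 / 2) * s ^ q := by
        field_simp

lemma one_div_mul_rpow_le_kappaStar (hq0 : 0 < q) (hq2 : q ≤ 2) (hem : 0 < em) (hep : 0 < ep)
    (ht : 0 ≤ t) : 1 / q * t ^ q ≤ kappaStar q em ep t := by
  unfold kappaStar
  split_ifs
  · exact one_div_mul_rpow_le_quadratic hq0 hq2 hem ht
  · exact le_rfl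
  · exact one_div_mul_rpow_le_quadratic hq0 hq2 hep ht

lemma kappaStar_nonneg (hq0 : 0 < q) (hq2 : q ≤ 2) (hem : 0 < em) (hep : 0 < ep) (ht : 0 ≤ t) :
    0 ≤ kappaStar q em ep t :=
  (by positivity : 0 ≤ 1 / q * t ^ q).trans (one_div_mul_rpow_le_kappaStar hq0 hq2 hem hep ht)

lemma rpow_sub_two_mul_sq_le (hs : 0 < s) (hst : s ≤ t) (hr : 2 ≤ r) :
    s ^ (q - 2) * t ^ 2 ≤ s ^ (q - r) * t ^ r := by
  have ht : 0 < t := hs.trans_le hst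
  calc s ^ (q - 2) * t ^ 2 = s ^ (q - r) * (s ^ (r - 2) * t ^ 2) := by
        rw [← mul_assoc, ← rpow_add hs]; ring_nf
    _ ≤ s ^ (q - r) * (t ^ (r - 2) * t ^ 2) := by
        gcongr
    _ = s ^ (q - r) * t ^ r := by
        rw [← rpow_natCast t 2, ← rpow_add ht]; norm_num

lemma kappaStar_le (hq0 : 0 < q) (hq2 : q ≤ 2) (hr : 2 ≤ r) (hem : 0 < em) (hep : 0 < ep)
    (ht : 0 ≤ t) :
    kappaStar q em ep t ≤ 1 / q * t ^ q + (1 / q * em ^ q + 1 / q * ep ^ (q - r) * t ^ r) := by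
  have hqinv : 1 / 2 ≤ 1 / q := one_div_le_one_div_of_le hq0 hq2
  have hemq : 0 ≤ 1 / q * em ^ q := by positivity
  have htq : 0 ≤ 1 / q * t ^ q := by positivity
  have htr : 0 ≤ 1 / q * ep ^ (q - r) * t ^ r := by positivity
  unfold kappaStar
  split_ifs with htem htlep
  · have hsq : em ^ (q - 2) * t ^ 2 ≤ em ^ q := by
      calc em ^ (q - 2) * t ^ 2 ≤ em ^ (q - 2) * em ^ 2 := by gcongr
        _ = em ^ q := by rw [← rpow_natCast em 2, ← rpow_add hem]; norm_num
    linarith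
  · linarith
  · have htep : ep ≤ t := (not_le.1 htlep).le
    have hsq : (1 / q - 1 / 2) * ep ^ q ≤ (1 / q - 1 / 2) * (ep ^ (q - 2) * t ^ 2) := by
      calc (1 / q - 1 / 2) * ep ^ q = (1 / q - 1 / 2) * (ep ^ (q - 2) * ep ^ 2) := by
            rw [← rpow_natCast ep 2, ← rpow_add hep]; norm_num
        _ ≤ (1 / q - 1 / 2) * (ep ^ (q - 2) * t ^ 2) := by gcongr
    have hquad : 1 / q * (ep ^ (q - 2) * t ^ 2) ≤ 1 / q * (ep ^ (q - r) * t ^ r) :=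
      mul_le_mul_of_nonneg_left (rpow_sub_two_mul_sq_le hep htep hr) (by positivity)
    linarith

lemma measurable_kappaStar : Measurable (kappaStar q em ep) := by
  unfold kappaStar
  refine Measurable.ite (measurableSet_le measurable_id measurable_const) (by fun_prop) ?_
  exact Measurable.ite (measurableSet_le measurable_id measurable_const) (by fun_prop) (by fun_prop)

end PointwiseBounds

section Integrals

variable {α E : Type*} [MeasurableSpace α] [NormedAddCommGroup E] {μ : Measure α} {f : α → E}
  {p q em ep r : ℝ}

lemma MeasureTheory.Integrable.norm_rpow_of_le [IsFiniteMeasure μ]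
    (hfr : Integrable (fun x => ‖f x‖ ^ r) μ) (hf : AEStronglyMeasurable f μ) (hp : 0 < p)
    (hpr : p ≤ r) : Integrable (fun x => ‖f x‖ ^ p) μ := by
  have hr : 0 < r := hp.trans_le hpr
  have hmem : MemLp f (ENNReal.ofReal r) μ := by
    rw [← integrable_norm_rpow_iff hf (by simpa using hr) ENNReal.ofReal_ne_top,
      ENNReal.toReal_ofReal hr.le]
    exact hfr
  have := (integrable_norm_rpow_iff hf (by simpa using hp) ENNReal.ofReal_ne_top).2
    (hmem.mono_exponent (ENNReal.ofReal_le_ofReal hpr))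
  rwa [ENNReal.toReal_ofReal hp.le] at this

lemma one_div_mul_integral_rpow_le_integral_kappaStar (hq0 : 0 < q) (hq2 : q ≤ 2) (hem : 0 < em)
    (hep : 0 < ep) (hκ : Integrable (fun x => kappaStar q em ep ‖f x‖) μ) :
    1 / q * ∫ x, ‖f x‖ ^ q ∂μ ≤ ∫ x, kappaStar q em ep ‖f x‖ ∂μ := by
  rw [← integral_const_mul]
  exact integral_mono_of_nonneg (ae_of_all _ fun x => by positivity) hκ
    (ae_of_all _ fun x => one_div_mul_rpow_le_kappaStar hq0 hq2 hem hep (norm_nonneg _))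

variable [IsFiniteMeasure μ]

lemma integrable_kappaStar_bound (hf : AEStronglyMeasurable f μ)
    (hfr : Integrable (fun x => ‖f x‖ ^ r) μ) (hq0 : 0 < q) (hqr : q ≤ r) :
    Integrable (fun x => 1 / q * ‖f x‖ ^ q + (1 / q * em ^ q + 1 / q * ep ^ (q - r) * ‖f x‖ ^ r))
      μ :=
  ((hfr.norm_rpow_of_le hf hq0 hqr).const_mul _).add ((integrable_const _).add (hfr.const_mul _))

lemma integrable_kappaStar_comp_norm (hf : AEStronglyMeasurable f μ)
    (hfr : Integrable (fun x => ‖f x‖ ^ r) μ) (hq0 : 0 < q) (hq2 : q ≤ 2) (hr : 2 ≤ r)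
    (hem : 0 < em) (hep : 0 < ep) : Integrable (fun x => kappaStar q em ep ‖f x‖) μ := by
  refine (integrable_kappaStar_bound (em := em) (ep := ep) hf hfr hq0 (by linarith)).mono'
    (measurable_kappaStar.comp_aemeasurable hf.norm.aemeasurable).aestronglyMeasurable
    (ae_of_all _ fun x => ?_)
  rw [norm_of_nonneg (kappaStar_nonneg hq0 hq2 hem hep (norm_nonneg _))]
  exact kappaStar_le hq0 hq2 hr hem hep (norm_nonneg _)

lemma integral_kappaStar_le (hf : AEStronglyMeasurable f μ)
    (hfr : Integrable (fun x => ‖f x‖ ^ r) μ) (hq0 : 0 < q) (hq2 : q ≤ 2) (hr : 2 ≤ r)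
    (hem : 0 < em) (hep : 0 < ep) :
    ∫ x, kappaStar q em ep ‖f x‖ ∂μ ≤ 1 / q * ∫ x, ‖f x‖ ^ q ∂μ
      + (μ.real Set.univ / q * em ^ q + 1 / q * ep ^ (q - r) * ∫ x, ‖f x‖ ^ r ∂μ) := by
  have hfq := hfr.norm_rpow_of_le hf hq0 (by linarith)
  have hrest : Integrable (fun x => 1 / q * em ^ q + 1 / q * ep ^ (q - r) * ‖f x‖ ^ r) μ :=
    (integrable_const _).add (hfr.const_mul _)
  calc ∫ x, kappaStar q em ep ‖f x‖ ∂μ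
      ≤ ∫ x, 1 / q * ‖f x‖ ^ q + (1 / q * em ^ q + 1 / q * ep ^ (q - r) * ‖f x‖ ^ r) ∂μ :=
        integral_mono_of_nonneg
          (ae_of_all _ fun x => kappaStar_nonneg hq0 hq2 hem hep (norm_nonneg _))
          (integrable_kappaStar_bound hf hfr hq0 (by linarith))
          (ae_of_all _ fun x => kappaStar_le hq0 hq2 hr hem hep (norm_nonneg _))
    _ = _ := by
        rw [integral_add (hfq.const_mul _) hrest,
          integral_add (integrable_const _) (hfr.const_mul _), integral_const, integral_const_mul,
          integral_const_mul, smul_eq_mul]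
        ring

end Integrals

theorem stmt7_general (q em ep r : ℝ) (hq1 : 1 < q) (hq2 : q < 2) (hem : 0 < em) (hemep : em ≤ ep)
    (hr : 2 ≤ r)
    {d : ℕ} (Ω : Set (EuclideanSpace ℝ (Fin d)))
    (hΩfin : volume Ω < ⊤)
    (σ σe : EuclideanSpace ℝ (Fin d) → EuclideanSpace ℝ (Fin d))
    (hσ : Measurable σ) (hσe : Measurable σe)
    (hσr : IntegrableOn (fun x => ‖σ x‖ ^ r) Ω volume)
    (hσe2 : IntegrableOn (fun x => ‖σe x‖ ^ 2) Ω volume)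
    (hmin : Jeps q em ep Ω σe ≤ Jeps q em ep Ω σ) :
    Jstar q Ω σe - Jstar q Ω σ ≤ Jeps q em ep Ω σe - Jstar q Ω σ ∧
    Jeps q em ep Ω σe - Jstar q Ω σ ≤
      (volume Ω).toReal / q * em ^ q
        + (1/q) * ep ^ (-(r - q)) * ∫ x in Ω, ‖σ x‖ ^ r := by
  have hq0 : 0 < q := by linarith
  have hep : 0 < ep := hem.trans_le hemep
  have : IsFiniteMeasure (volume.restrict Ω) := isFiniteMeasure_restrict.2 hΩfin.ne
  have hσe2r : IntegrableOn (fun x => ‖σe x‖ ^ (2 : ℝ)) Ω volume := by simpa [rpow_two] using hσe2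
  have hlower := one_div_mul_integral_rpow_le_integral_kappaStar hq0 hq2.le hem hep
    (integrable_kappaStar_comp_norm hσe.aestronglyMeasurable hσe2r hq0 hq2.le le_rfl hem hep)
  have hupper := integral_kappaStar_le hσ.aestronglyMeasurable hσr hq0 hq2.le hr hem hep
  rw [Measure.real, Measure.restrict_apply_univ, ← neg_sub r q] at hupper
  unfold Jstar Jeps at *
  constructor <;> linarith

/-- convergence in the relaxation parameter. For `1 < q < 2`,
`0 < ε₋ ≤ ε₊ < ∞`, `Ω ⊂ ℝ^d` of finite measure and `r ≥ 2 (≥ q)`: if `σ ∈ L^r(Ω;ℝ^d)` and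
`σ_ε ∈ L²(Ω;ℝ^d)` satisfies the minimizing property `J*_ε(σ_ε) ≤ J*_ε(σ)`, then
`J*(σ_ε) - J*(σ) ≤ J*_ε(σ_ε) - J*(σ) ≤ (|Ω|/q) ε₋^q + (1/q) ε₊^{-(r-q)} ‖σ‖_{L^r}^r`. -/
theorem stmt7 (q em ep r : ℝ) (hq1 : 1 < q) (hq2 : q < 2) (hem : 0 < em) (hemep : em ≤ ep)
    (hr : 2 ≤ r)
    {d : ℕ} (Ω : Set (EuclideanSpace ℝ (Fin d))) (hΩ : MeasurableSet Ω)
    (hΩfin : volume Ω < ⊤)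
    (σ σe : EuclideanSpace ℝ (Fin d) → EuclideanSpace ℝ (Fin d))
    (hσ : Measurable σ) (hσe : Measurable σe)
    (hσr : IntegrableOn (fun x => ‖σ x‖ ^ r) Ω volume)
    (hσe2 : IntegrableOn (fun x => ‖σe x‖ ^ 2) Ω volume)
    (hmin : Jeps q em ep Ω σe ≤ Jeps q em ep Ω σ) :
    Jstar q Ω σe - Jstar q Ω σ ≤ Jeps q em ep Ω σe - Jstar q Ω σ ∧
    Jeps q em ep Ω σe - Jstar q Ω σ ≤
      (volume Ω).toReal / q * em ^ q
        + (1/q) * ep ^ (-(r - q)) * ∫ x in Ω, ‖σ x‖ ^ r :=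
  stmt7_general q em ep r hq1 hq2 hem hemep hr Ω hΩfin σ σe hσ hσe hσr hσe2 hmin
end

section
/- Fix q with 1 < q < 2, a relaxation interval ε = [ε₋, ε₊] with 0 < ε₋ ≤ ε₊ < ∞, and let Ω ⊂ ℝ^d be a measurable set of finite Lebesgue measure. Let σ_ε, τ ∈ L²(Ω; ℝ^d) satisfy the Euler–Lagrange orthogonality ∫_Ω A*_ε(σ_ε)·(τ - σ_ε) dx = 0 (which holds when σ_ε minimizes J*_ε over an affine constraint set containing τ). Then J*_ε(τ) - J*_ε(σ_ε) ≤ ∫_Ω (A*_ε(τ) - A*_ε(σ_ε))·(τ - σ_ε) dx, and there exist constants 0 < c ≤ C < ∞ depending solely on q (independent of ε) such that ∫_Ω (A*_ε(τ) - A*_ε(σ_ε))·(τ - σ_ε) dx ≤ C ∫_Ω |V*_ε(τ) - V*_ε(σ_ε)|² dx and c ∫_Ω |V*_ε(τ) - V*_ε(σ_ε)|² dx ≤ J*_ε(τ) - J*_ε(σ_ε). -/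
open Real MeasureTheory
open scoped RealInnerProductSpace

/-- `A*_ε(P) = clamp_ε(|P|)^(q-2) P`. -/
noncomputable def Astar (q em ep : ℝ) {d : ℕ} (P : EuclideanSpace ℝ (Fin d)) :
    EuclideanSpace ℝ (Fin d) :=
  (max em (min ‖P‖ ep)) ^ (q-2) • P

/-- `V*_ε(P) = clamp_ε(|P|)^((q-2)/2) P`. -/
noncomputable def Vstar (q em ep : ℝ) {d : ℕ} (P : EuclideanSpace ℝ (Fin d)) :
    EuclideanSpace ℝ (Fin d) :=
  (max em (min ‖P‖ ep)) ^ ((q-2)/2) • P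

/-!
Write `A*_ε` and `V*_ε` as `P ↦ clamp_ε(|P|)^r P` with `r = q-2` and `r = (q-2)/2`. Since
`clamp_ε(t)/t` is antitone, Bernoulli's inequality gives, for `-1 ≤ r ≤ 0` and `0 ≤ v ≤ u`,
`(1+r) clamp_ε(u)^r (u-v) ≤ clamp_ε(u)^r u - clamp_ε(v)^r v ≤ clamp_ε(v)^r (u-v)`.
Splitting `|P-Q|²` into `(|P|-|Q|)²` and the Cauchy–Schwarz defect `2(|P||Q| - P·Q)`, this makes
`P ↦ clamp_ε(|P|)^r P` bi-Lipschitz with constants comparable to `clamp_ε(|P|+|Q|)^r`, so that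
`(A*_ε(P)-A*_ε(Q))·(P-Q)` and `|V*_ε(P)-V*_ε(Q)|²` are both comparable to
`clamp_ε(|P|+|Q|)^(q-2) |P-Q|²`. The same weight, times `q-1`, is a modulus of strong convexity
of `κ*_ε`, whose (right) derivative is `clamp_ε(t)^(q-2) t`; this bounds the Bregman distance
`κ*_ε(|τ|) - κ*_ε(|σ|) - A*_ε(σ)·(τ-σ)` from below. By the orthogonality, the integral of the
Bregman distance is exactly `J*_ε(τ) - J*_ε(σ_ε)`, and the pointwise estimates integrate.
-/

open Set Filter Topology

namespace RelaxedDual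

section Clamp

variable {em ep r s t u v : ℝ}

def clamp (em ep t : ℝ) : ℝ := max em (min t ep)

lemma clamp_pos (hem : 0 < em) (t : ℝ) : 0 < clamp em ep t :=
  hem.trans_le (le_max_left _ _)

lemma continuous_clamp : Continuous (clamp em ep) :=
  continuous_const.max (continuous_id.min continuous_const)

lemma clamp_mono : Monotone (clamp em ep) := fun _ _ h =>
  max_le_max le_rfl (min_le_min h le_rfl)

lemma clamp_of_le_left (hee : em ≤ ep) (h : t ≤ em) : clamp em ep t = em := by
  rw [clamp, min_eq_left (h.trans hee), max_eq_left h]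

lemma clamp_of_mem (h₁ : em ≤ t) (h₂ : t ≤ ep) : clamp em ep t = t := by
  rw [clamp, min_eq_left h₂, max_eq_right h₁]

lemma clamp_of_right_le (hee : em ≤ ep) (h : ep ≤ t) : clamp em ep t = ep := by
  rw [clamp, min_eq_right h, max_eq_right hee]

lemma mul_clamp_le_mul_clamp (hem : 0 ≤ em) (hee : em ≤ ep) (hv : 0 ≤ v) (hvu : v ≤ u) :
    v * clamp em ep u ≤ u * clamp em ep v := by
  rw [clamp, clamp, mul_max_of_nonneg _ _ hv, mul_max_of_nonneg _ _ (hv.trans hvu),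
    mul_min_of_nonneg _ _ hv, mul_min_of_nonneg _ _ (hv.trans hvu), mul_comm v u]
  exact max_le_max (mul_le_mul_of_nonneg_right hvu hem)
    (min_le_min le_rfl (mul_le_mul_of_nonneg_right hvu (hem.trans hee)))

lemma clamp_rpow_le_of_le (hem : 0 < em) (hr : r ≤ 0) (h : s ≤ t) :
    clamp em ep t ^ r ≤ clamp em ep s ^ r :=
  Real.rpow_le_rpow_of_nonpos (clamp_pos hem s) (clamp_mono h) hr

lemma clamp_rpow_le (hem : 0 < em) (hr : r ≤ 0) (t : ℝ) : clamp em ep t ^ r ≤ em ^ r :=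
  Real.rpow_le_rpow_of_nonpos hem (le_max_left _ _) hr

lemma sq_clamp_rpow_half (hem : 0 < em) (r t : ℝ) :
    (clamp em ep t ^ (r/2))^2 = clamp em ep t ^ r := by
  rw [← Real.rpow_natCast, ← Real.rpow_mul (clamp_pos hem t).le]
  norm_num

lemma clamp_rpow_le_div_rpow_mul (hem : 0 < em) (hee : em ≤ ep) (hr : r ≤ 0) (hv : 0 < v)
    (hvu : v ≤ u) : clamp em ep v ^ r ≤ (v / u) ^ r * clamp em ep u ^ r := by
  have hu : 0 < u := hv.trans_le hvu
  rw [← Real.mul_rpow (div_pos hv hu).le (clamp_pos hem u).le]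
  refine Real.rpow_le_rpow_of_nonpos (mul_pos (div_pos hv hu) (clamp_pos hem u)) ?_ hr
  rw [div_mul_eq_mul_div, div_le_iff₀ hu, mul_comm _ u]
  exact mul_clamp_le_mul_clamp hem.le hee hv.le hvu

lemma clamp_rpow_le_mul_clamp_rpow (hem : 0 < em) (hee : em ≤ ep) (hr₀ : r ≤ 0) (hr₁ : -1 ≤ r)
    {k : ℝ} (hk : 1 ≤ k) (ht : 0 < t) (htv : t ≤ k * v) :
    clamp em ep v ^ r ≤ k * clamp em ep t ^ r := by
  have hk₀ : 0 < k := one_pos.trans_le hk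
  have hkt : t / k ≤ t := div_le_self ht.le hk
  have hpow : (t / k / t) ^ r ≤ k := by
    rw [div_div_cancel_left' ht.ne', Real.inv_rpow hk₀.le, ← Real.rpow_neg hk₀.le]
    exact Real.rpow_le_self_of_one_le hk (by linarith)
  calc clamp em ep v ^ r ≤ clamp em ep (t / k) ^ r :=
        clamp_rpow_le_of_le hem hr₀ ((div_le_iff₀' hk₀).2 htv)
    _ ≤ (t / k / t) ^ r * clamp em ep t ^ r :=
        clamp_rpow_le_div_rpow_mul hem hee hr₀ (div_pos ht hk₀) hkt
    _ ≤ k * clamp em ep t ^ r :=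
        mul_le_mul_of_nonneg_right hpow (Real.rpow_nonneg (clamp_pos hem t).le r)

end Clamp

section Radial

variable {em ep r u v : ℝ}

noncomputable def radial (r em ep t : ℝ) : ℝ := clamp em ep t ^ r * t

lemma radial_sub_le (hem : 0 < em) (hr : r ≤ 0) (hv : 0 ≤ v) (hvu : v ≤ u) :
    radial r em ep u - radial r em ep v ≤ clamp em ep v ^ r * (u - v) := by
  have := mul_le_mul_of_nonneg_right (clamp_rpow_le_of_le (ep := ep) hem hr hvu) (hv.trans hvu)
  rw [radial, radial]
  linarith

lemma mul_le_radial_sub (hem : 0 < em) (hee : em ≤ ep) (hr₀ : r ≤ 0) (hr₁ : -1 ≤ r)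
    (hv : 0 ≤ v) (hvu : v ≤ u) :
    (1 + r) * clamp em ep u ^ r * (u - v) ≤ radial r em ep u - radial r em ep v := by
  suffices h : clamp em ep v ^ r * v ≤ clamp em ep u ^ r * ((1 + r) * v - r * u) by
    rw [radial, radial]; linarith
  rcases hv.eq_or_lt with rfl | hv
  · simpa using mul_nonneg (Real.rpow_nonneg (clamp_pos hem u).le r)
      (mul_nonneg_of_nonpos_of_nonpos hr₀ (neg_nonpos.2 hvu))
  have hu : 0 < u := hv.trans_le hvu
  -- Bernoulli: `(v / u) ^ (1 + r) ≤ 1 + (1 + r) * (v / u - 1)`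
  have hbern := rpow_one_add_le_one_add_mul_self (s := v / u - 1)
    (by linarith [div_nonneg hv.le hu.le]) (p := 1 + r) (by linarith) (by linarith)
  rw [add_sub_cancel, Real.rpow_add (div_pos hv hu), Real.rpow_one] at hbern
  calc clamp em ep v ^ r * v ≤ (v / u) ^ r * clamp em ep u ^ r * v :=
        mul_le_mul_of_nonneg_right (clamp_rpow_le_div_rpow_mul hem hee hr₀ hv hvu) hv.le
    _ = clamp em ep u ^ r * u * (v / u * (v / u) ^ r) := by field_simp
    _ ≤ clamp em ep u ^ r * u * (1 + (1 + r) * (v / u - 1)) :=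
        mul_le_mul_of_nonneg_left hbern (mul_nonneg (Real.rpow_nonneg (clamp_pos hem u).le r) hu.le)
    _ = clamp em ep u ^ r * ((1 + r) * v - r * u) := by field_simp; ring

lemma radial_le_radial (hem : 0 < em) (hee : em ≤ ep) (hr₀ : r ≤ 0) (hr₁ : -1 ≤ r)
    (hv : 0 ≤ v) (hvu : v ≤ u) : radial r em ep v ≤ radial r em ep u := by
  have := mul_le_radial_sub (ep := ep) hem hee hr₀ hr₁ hv hvu
  have : 0 ≤ (1 + r) * clamp em ep u ^ r * (u - v) :=
    mul_nonneg (mul_nonneg (by linarith) (Real.rpow_nonneg (clamp_pos hem u).le r)) (by linarith)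
  linarith

end Radial

theorem mul_sub_le_sub_of_hasDerivWithinAt_Ioi {f f' : ℝ → ℝ} {a b x y : ℝ}
    (hf : ContinuousOn f (Icc a b)) (hf' : ∀ s ∈ Ico a b, HasDerivWithinAt f (f' s) (Ioi s) s)
    (hmono : MonotoneOn f' (Icc a b)) (hx : x ∈ Icc a b) (hy : y ∈ Icc a b) :
    f' x * (y - x) ≤ f y - f x := by
  have hsub : uIcc x y ⊆ Icc a b := uIcc_subset_Icc hx hy
  have hint : IntervalIntegrable f' volume x y := (hmono.mono hsub).intervalIntegrable
  rw [← intervalIntegral.integral_eq_sub_of_hasDeriv_right (hf.mono hsub) (fun s hs => hf' s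
    ⟨(le_min hx.1 hy.1).trans hs.1.le, hs.2.trans_le (max_le_iff.2 ⟨hx.2, hy.2⟩)⟩) hint]
  rcases le_total x y with hxy | hyx
  · calc f' x * (y - x) = ∫ _ in x..y, f' x := by simp [mul_comm]
      _ ≤ ∫ s in x..y, f' s := intervalIntegral.integral_mono_on hxy intervalIntegrable_const
          hint fun s hs => hmono hx (hsub (Icc_subset_uIcc hs)) hs.1
  · rw [intervalIntegral.integral_symm]
    have : ∫ s in y..x, f' s ≤ ∫ _ in y..x, f' x :=
      intervalIntegral.integral_mono_on hyx hint.symm intervalIntegrable_const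
        fun s hs => hmono (hsub (Icc_subset_uIcc' hs)) hx hs.2
    simp only [intervalIntegral.integral_const, smul_eq_mul] at this
    linarith

section Kappa

variable {q em ep : ℝ}

lemma rpow_sub_two_mul_sq (q : ℝ) {t : ℝ} (ht : 0 < t) : t ^ (q-2) * t^2 = t ^ q := by
  rw [← Real.rpow_natCast, ← Real.rpow_add ht]
  norm_num

lemma kappaStar_eq (hem : 0 < em) (hee : em ≤ ep) (t : ℝ) :
    kappaStar q em ep t
      = 1/2 * clamp em ep t ^ (q-2) * t^2 + (1/q - 1/2) * clamp em ep t ^ q := by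
  rw [kappaStar]
  split_ifs with h₁ h₂
  · rw [clamp_of_le_left hee h₁]
  · have ht : 0 < t := hem.trans (not_le.1 h₁)
    rw [clamp_of_mem (not_le.1 h₁).le h₂]
    linear_combination (-1/2 : ℝ) * rpow_sub_two_mul_sq q ht
  · rw [clamp_of_right_le hee (not_le.1 h₂).le]

lemma continuous_kappaStar (hem : 0 < em) (hee : em ≤ ep) : Continuous (kappaStar q em ep) := by
  have hc : ∀ p : ℝ, Continuous fun t => clamp em ep t ^ p := fun p =>
    continuous_clamp.rpow_const fun t => Or.inl (clamp_pos hem t).ne'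
  simp only [funext (kappaStar_eq (q := q) hem hee)]
  fun_prop

lemma hasDerivWithinAt_kappaStar (hq : q ≠ 0) (hem : 0 < em) (hee : em ≤ ep) (t : ℝ) :
    HasDerivWithinAt (kappaStar q em ep) (radial (q-2) em ep t) (Ioi t) t := by
  rw [funext (kappaStar_eq (q := q) hem hee), radial]
  -- on a right neighbourhood of `t` the clamp is either frozen at `clamp t` or the identity
  have frozen (h : ∀ᶠ s in 𝓝[>] t, clamp em ep s = clamp em ep t) :
      HasDerivWithinAt (fun s => 1/2 * clamp em ep s ^ (q-2) * s^2
        + (1/q - 1/2) * clamp em ep s ^ q) (clamp em ep t ^ (q-2) * t) (Ioi t) t := by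
    have hquad := (((hasDerivAt_pow 2 t).const_mul (1/2 * clamp em ep t ^ (q-2))).add_const
      ((1/q - 1/2) * clamp em ep t ^ q)).hasDerivWithinAt (s := Ioi t)
    refine (hquad.congr_of_eventuallyEq ?_ rfl).congr_deriv (by push_cast; ring)
    filter_upwards [h] with s hs
    rw [hs]
  rcases lt_or_ge t em with h₁ | h₁
  · refine frozen ?_
    filter_upwards [nhdsWithin_le_nhds (Iio_mem_nhds h₁)] with s hs
    rw [clamp_of_le_left hee hs.le, clamp_of_le_left hee h₁.le]
  rcases lt_or_ge t ep with h₂ | h₂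
  · have ht : 0 < t := hem.trans_le h₁
    have hpow := ((Real.hasDerivAt_rpow_const (p := q) (Or.inl ht.ne')).const_mul
      (1/q)).hasDerivWithinAt (s := Ioi t)
    refine (hpow.congr_of_eventuallyEq ?_ ?_).congr_deriv ?_
    · filter_upwards [inter_mem_nhdsWithin (Ioi t) (Iio_mem_nhds h₂), self_mem_nhdsWithin]
        with s hs hts
      rw [clamp_of_mem (h₁.trans hts.le) hs.2.le]
      linear_combination (1/2 : ℝ) * rpow_sub_two_mul_sq q (ht.trans hts)
    · rw [clamp_of_mem h₁ h₂.le]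
      linear_combination (1/2 : ℝ) * rpow_sub_two_mul_sq q ht
    · rw [clamp_of_mem h₁ h₂.le, ← Real.rpow_add_one ht.ne']
      field_simp
      ring_nf
  · refine frozen ?_
    filter_upwards [self_mem_nhdsWithin] with s hs
    rw [clamp_of_right_le hee h₂, clamp_of_right_le hee (h₂.trans hs.le)]

lemma le_kappaStar_sub_sub (hq₁ : 1 < q) (hq₂ : q < 2) (hem : 0 < em) (hee : em ≤ ep)
    {u v : ℝ} (hu : 0 ≤ u) (hv : 0 ≤ v) :
    (q-1)/2 * clamp em ep (u+v) ^ (q-2) * (u-v)^2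
      ≤ kappaStar q em ep u - kappaStar q em ep v - radial (q-2) em ep v * (u - v) := by
  set k := (q-1) * clamp em ep (u+v) ^ (q-2) with hk
  have hmono : MonotoneOn (fun s => radial (q-2) em ep s - k * s) (Icc 0 (u+v)) := by
    intro s hs t ht hst
    have h₁ := mul_le_radial_sub (r := q-2) (ep := ep) hem hee (by linarith) (by linarith) hs.1 hst
    have h₂ : k ≤ (1 + (q-2)) * clamp em ep t ^ (q-2) := by
      rw [show 1 + (q-2) = q-1 by ring]
      exact mul_le_mul_of_nonneg_left (clamp_rpow_le_of_le hem (by linarith) ht.2) (by linarith)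
    dsimp only
    nlinarith
  have hderiv (s : ℝ) : HasDerivWithinAt (fun s => kappaStar q em ep s - k/2 * s^2)
      (radial (q-2) em ep s - k * s) (Ioi s) s := by
    refine ((hasDerivWithinAt_kappaStar (by positivity) hem hee s).sub
      ((hasDerivAt_pow 2 s).const_mul (k/2)).hasDerivWithinAt).congr_deriv ?_
    push_cast; ring
  have := mul_sub_le_sub_of_hasDerivWithinAt_Ioi
    (((continuous_kappaStar hem hee).sub (by fun_prop)).continuousOn)
    (fun s _ => hderiv s) hmono ⟨hv, by linarith⟩ ⟨hu, by linarith⟩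
  rw [Pi.sub_apply, Pi.sub_apply, hk] at this
  linear_combination this

lemma abs_kappaStar_le (hq₁ : 1 < q) (hq₂ : q < 2) (hem : 0 < em) (hee : em ≤ ep)
    {t : ℝ} (ht : 0 ≤ t) :
    |kappaStar q em ep t| ≤ |kappaStar q em ep 0| + em ^ (q-2) * t^2 := by
  have hmod (s : ℝ) : 0 ≤ (q-1)/2 * clamp em ep s ^ (q-2) :=
    mul_nonneg (by linarith) (Real.rpow_nonneg (clamp_pos hem s).le _)
  have hlow := le_kappaStar_sub_sub hq₁ hq₂ hem hee ht le_rfl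
  have hupp := le_kappaStar_sub_sub hq₁ hq₂ hem hee le_rfl ht
  have hclamp := mul_le_mul_of_nonneg_right
    (clamp_rpow_le (ep := ep) hem (by linarith : q-2 ≤ 0) t) (sq_nonneg t)
  simp only [radial, zero_add, add_zero, mul_zero, zero_mul, sub_zero] at hlow hupp
  rw [abs_le]
  constructor
  · nlinarith [neg_abs_le (kappaStar q em ep 0), hmod t, sq_nonneg t]
  · nlinarith [le_abs_self (kappaStar q em ep 0), hmod t, sq_nonneg t]

end Kappa

section RelaxedPow

variable {E : Type*} [NormedAddCommGroup E] [InnerProductSpace ℝ E] {r em ep : ℝ}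

noncomputable def relaxedPow (r em ep : ℝ) (P : E) : E := clamp em ep ‖P‖ ^ r • P

lemma norm_relaxedPow (hem : 0 < em) (P : E) : ‖relaxedPow r em ep P‖ = radial r em ep ‖P‖ := by
  rw [relaxedPow, norm_smul, Real.norm_of_nonneg (Real.rpow_nonneg (clamp_pos hem _).le _), radial]

lemma norm_relaxedPow_le (hem : 0 < em) (hr : r ≤ 0) (P : E) :
    ‖relaxedPow r em ep P‖ ≤ em ^ r * ‖P‖ := by
  rw [norm_relaxedPow hem, radial]
  exact mul_le_mul_of_nonneg_right (clamp_rpow_le hem hr _) (norm_nonneg P)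

lemma continuous_relaxedPow (hem : 0 < em) : Continuous (relaxedPow (E := E) r em ep) :=
  ((continuous_clamp.comp continuous_norm).rpow_const
    fun _ => Or.inl (clamp_pos hem _).ne').smul continuous_id

lemma inner_relaxedPow_sub (P Q : E) :
    ⟪relaxedPow r em ep P, P - Q⟫
      = radial r em ep ‖P‖ * (‖P‖ - ‖Q‖) + clamp em ep ‖P‖ ^ r * (‖P‖ * ‖Q‖ - ⟪P, Q⟫) := by
  rw [relaxedPow, real_inner_smul_left, inner_sub_right, real_inner_self_eq_norm_sq, radial]
  ring

lemma norm_relaxedPow_sub_sq (P Q : E) :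
    ‖relaxedPow r em ep P - relaxedPow r em ep Q‖^2
      = (radial r em ep ‖P‖ - radial r em ep ‖Q‖)^2
        + 2 * (clamp em ep ‖P‖ ^ r * clamp em ep ‖Q‖ ^ r) * (‖P‖ * ‖Q‖ - ⟪P, Q⟫) := by
  rw [relaxedPow, relaxedPow, norm_sub_sq_real, norm_smul, norm_smul, real_inner_smul_left,
    real_inner_smul_right, mul_pow, mul_pow, Real.norm_eq_abs, Real.norm_eq_abs, sq_abs, sq_abs,
    radial, radial]
  ring

lemma norm_sub_sq_eq (P Q : E) : ‖P - Q‖^2 = (‖P‖ - ‖Q‖)^2 + 2 * (‖P‖ * ‖Q‖ - ⟪P, Q⟫) := by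
  rw [norm_sub_sq_real]
  ring

lemma norm_relaxedPow_sub_le_of_norm_le (hem : 0 < em) (hee : em ≤ ep) (hr₀ : r ≤ 0)
    (hr₁ : -1 ≤ r) {P Q : E} (h : ‖Q‖ ≤ ‖P‖) :
    ‖relaxedPow r em ep P - relaxedPow r em ep Q‖ ≤ clamp em ep ‖Q‖ ^ r * ‖P - Q‖ := by
  have hgQ := Real.rpow_nonneg (clamp_pos (ep := ep) hem ‖Q‖).le r
  have hrad : (radial r em ep ‖P‖ - radial r em ep ‖Q‖)^2
      ≤ (clamp em ep ‖Q‖ ^ r * (‖P‖ - ‖Q‖))^2 :=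
    pow_le_pow_left₀ (sub_nonneg.2 (radial_le_radial hem hee hr₀ hr₁ (norm_nonneg Q) h))
      (radial_sub_le hem hr₀ (norm_nonneg Q) h) 2
  have hcross : 2 * (clamp em ep ‖P‖ ^ r * clamp em ep ‖Q‖ ^ r) * (‖P‖ * ‖Q‖ - ⟪P, Q⟫)
      ≤ 2 * (clamp em ep ‖Q‖ ^ r * clamp em ep ‖Q‖ ^ r) * (‖P‖ * ‖Q‖ - ⟪P, Q⟫) := by
    have := mul_le_mul_of_nonneg_right (clamp_rpow_le_of_le (ep := ep) hem hr₀ h) hgQ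
    have := sub_nonneg.2 (real_inner_le_norm P Q)
    gcongr
  refine (pow_le_pow_iff_left₀ (norm_nonneg _) (by positivity) two_ne_zero).1 ?_
  rw [norm_relaxedPow_sub_sq, mul_pow, norm_sub_sq_eq]
  nlinarith

lemma norm_relaxedPow_sub_le (hem : 0 < em) (hee : em ≤ ep) (hr₀ : r ≤ 0) (hr₁ : -1 ≤ r)
    (P Q : E) :
    ‖relaxedPow r em ep P - relaxedPow r em ep Q‖
      ≤ 5 * clamp em ep (‖P‖ + ‖Q‖) ^ r * ‖P - Q‖ := by
  wlog h : ‖Q‖ ≤ ‖P‖ generalizing P Q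
  · have := this Q P (le_of_not_ge h)
    rwa [norm_sub_rev Q P, add_comm ‖Q‖, norm_sub_rev (relaxedPow r em ep Q)] at this
  have hgT := Real.rpow_nonneg (clamp_pos (ep := ep) hem (‖P‖ + ‖Q‖)).le r
  rcases lt_or_ge (4 * ‖Q‖) ‖P‖ with hfar | hnear
  · -- far apart: both images are small compared to `‖P - Q‖ ≥ 3/5 (‖P‖ + ‖Q‖)`
    have hPQ : 3/5 * (‖P‖ + ‖Q‖) ≤ ‖P - Q‖ := by linarith [norm_sub_norm_le P Q]
    have hrad (R : E) (hR : ‖R‖ ≤ ‖P‖ + ‖Q‖) :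
        ‖relaxedPow r em ep R‖ ≤ clamp em ep (‖P‖ + ‖Q‖) ^ r * (‖P‖ + ‖Q‖) := by
      rw [norm_relaxedPow hem]
      exact radial_le_radial hem hee hr₀ hr₁ (norm_nonneg R) hR
    calc ‖relaxedPow r em ep P - relaxedPow r em ep Q‖
        ≤ ‖relaxedPow r em ep P‖ + ‖relaxedPow r em ep Q‖ := norm_sub_le _ _
      _ ≤ 2 * clamp em ep (‖P‖ + ‖Q‖) ^ r * (‖P‖ + ‖Q‖) := by
          linarith [hrad P (by linarith [norm_nonneg Q]), hrad Q (by linarith [norm_nonneg P])]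
      _ ≤ 5 * clamp em ep (‖P‖ + ‖Q‖) ^ r * ‖P - Q‖ := by
          nlinarith [mul_le_mul_of_nonneg_left hPQ hgT, mul_nonneg hgT (norm_nonneg (P - Q))]
  rcases (norm_nonneg Q).eq_or_lt with hQ | hQ
  · have hP : ‖P‖ = 0 := by linarith [norm_nonneg P]
    simp [norm_eq_zero.1 hP, norm_eq_zero.1 hQ.symm]
  calc ‖relaxedPow r em ep P - relaxedPow r em ep Q‖ ≤ clamp em ep ‖Q‖ ^ r * ‖P - Q‖ :=
        norm_relaxedPow_sub_le_of_norm_le hem hee hr₀ hr₁ h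
    _ ≤ 5 * clamp em ep (‖P‖ + ‖Q‖) ^ r * ‖P - Q‖ :=
        mul_le_mul_of_nonneg_right (clamp_rpow_le_mul_clamp_rpow hem hee hr₀ hr₁
          (by norm_num) (by positivity) (by linarith)) (norm_nonneg _)

lemma le_norm_relaxedPow_sub (hem : 0 < em) (hee : em ≤ ep) (hr₀ : r ≤ 0) (hr₁ : -1 ≤ r)
    (P Q : E) :
    (1 + r) * clamp em ep (‖P‖ + ‖Q‖) ^ r * ‖P - Q‖
      ≤ ‖relaxedPow r em ep P - relaxedPow r em ep Q‖ := by
  wlog h : ‖Q‖ ≤ ‖P‖ generalizing P Q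
  · have := this Q P (le_of_not_ge h)
    rwa [norm_sub_rev Q P, add_comm ‖Q‖, norm_sub_rev (relaxedPow r em ep Q)] at this
  have hgT := Real.rpow_nonneg (clamp_pos (ep := ep) hem (‖P‖ + ‖Q‖)).le r
  have hgP := clamp_rpow_le_of_le (ep := ep) hem hr₀
    (le_add_of_nonneg_right (norm_nonneg Q) : ‖P‖ ≤ ‖P‖ + ‖Q‖)
  have hgQ := clamp_rpow_le_of_le (ep := ep) hem hr₀
    (le_add_of_nonneg_left (norm_nonneg P) : ‖Q‖ ≤ ‖P‖ + ‖Q‖)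
  have hrad : ((1 + r) * clamp em ep (‖P‖ + ‖Q‖) ^ r * (‖P‖ - ‖Q‖))^2
      ≤ (radial r em ep ‖P‖ - radial r em ep ‖Q‖)^2 := by
    refine pow_le_pow_left₀ (mul_nonneg (mul_nonneg (by linarith) hgT) (sub_nonneg.2 h)) ?_ 2
    refine le_trans ?_ (mul_le_radial_sub hem hee hr₀ hr₁ (norm_nonneg Q) h)
    gcongr
    linarith
  have hcross : (1 + r)^2 * (clamp em ep (‖P‖ + ‖Q‖) ^ r)^2 * (‖P‖ * ‖Q‖ - ⟪P, Q⟫)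
      ≤ clamp em ep ‖P‖ ^ r * clamp em ep ‖Q‖ ^ r * (‖P‖ * ‖Q‖ - ⟪P, Q⟫) := by
    refine mul_le_mul_of_nonneg_right ?_ (sub_nonneg.2 (real_inner_le_norm P Q))
    have h1r : (1 + r)^2 ≤ 1 := by nlinarith
    nlinarith [mul_le_mul hgP hgQ hgT (hgT.trans hgP),
      mul_le_mul_of_nonneg_right h1r (sq_nonneg (clamp em ep (‖P‖ + ‖Q‖) ^ r))]
  refine (pow_le_pow_iff_left₀ (mul_nonneg (mul_nonneg (by linarith) hgT) (norm_nonneg _))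
    (norm_nonneg _) two_ne_zero).1 ?_
  rw [norm_relaxedPow_sub_sq, mul_pow, norm_sub_sq_eq]
  nlinarith

end RelaxedPow

section Bregman

variable {E : Type*} [NormedAddCommGroup E] [InnerProductSpace ℝ E] {q em ep : ℝ}

noncomputable def bregman (q em ep : ℝ) (P Q : E) : ℝ :=
  kappaStar q em ep ‖P‖ - kappaStar q em ep ‖Q‖ - ⟪relaxedPow (q-2) em ep Q, P - Q⟫

lemma le_bregman (hq₁ : 1 < q) (hq₂ : q < 2) (hem : 0 < em) (hee : em ≤ ep) (P Q : E) :
    (q-1)/2 * clamp em ep (‖P‖ + ‖Q‖) ^ (q-2) * ‖P - Q‖^2 ≤ bregman q em ep P Q := by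
  have h1D := le_kappaStar_sub_sub hq₁ hq₂ hem hee (norm_nonneg P) (norm_nonneg Q)
  have hY := sub_nonneg.2 (real_inner_le_norm P Q)
  have hgT := Real.rpow_nonneg (clamp_pos (ep := ep) hem (‖P‖ + ‖Q‖)).le (q-2)
  have hgQ := clamp_rpow_le_of_le (ep := ep) (r := q-2) hem (by linarith)
    (le_add_of_nonneg_left (norm_nonneg P) : ‖Q‖ ≤ ‖P‖ + ‖Q‖)
  rw [bregman, norm_sub_sq_eq, ← neg_sub Q P, inner_neg_right, inner_relaxedPow_sub,
    real_inner_comm P Q, mul_comm ‖Q‖]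
  nlinarith [mul_le_mul_of_nonneg_right hgQ hY,
    mul_le_mul_of_nonneg_right (by linarith : q - 1 ≤ 1) (mul_nonneg hgT hY)]

lemma bregman_nonneg (hq₁ : 1 < q) (hq₂ : q < 2) (hem : 0 < em) (hee : em ≤ ep) (P Q : E) :
    0 ≤ bregman q em ep P Q :=
  le_trans (mul_nonneg (mul_nonneg (by linarith) (Real.rpow_nonneg (clamp_pos hem _).le _))
    (sq_nonneg _)) (le_bregman hq₁ hq₂ hem hee P Q)

lemma bregman_add_bregman (P Q : E) :
    bregman q em ep P Q + bregman q em ep Q P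
      = ⟪relaxedPow (q-2) em ep P - relaxedPow (q-2) em ep Q, P - Q⟫ := by
  rw [bregman, bregman, ← neg_sub P Q, inner_neg_right, inner_sub_left]
  ring

lemma bregman_le_inner (hq₁ : 1 < q) (hq₂ : q < 2) (hem : 0 < em) (hee : em ≤ ep) (P Q : E) :
    bregman q em ep P Q ≤ ⟪relaxedPow (q-2) em ep P - relaxedPow (q-2) em ep Q, P - Q⟫ := by
  rw [← bregman_add_bregman]
  linarith [bregman_nonneg hq₁ hq₂ hem hee Q P]

lemma inner_relaxedPow_sub_le (hq₁ : 1 < q) (hq₂ : q < 2) (hem : 0 < em) (hee : em ≤ ep)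
    (P Q : E) :
    ⟪relaxedPow (q-2) em ep P - relaxedPow (q-2) em ep Q, P - Q⟫
      ≤ 20 * ‖relaxedPow ((q-2)/2) em ep P - relaxedPow ((q-2)/2) em ep Q‖^2 := by
  have hA := norm_relaxedPow_sub_le (r := q-2) hem hee (by linarith) (by linarith) P Q
  have hV := le_norm_relaxedPow_sub (r := (q-2)/2) hem hee (by linarith) (by linarith) P Q
  have hgT := Real.rpow_nonneg (clamp_pos (ep := ep) hem (‖P‖ + ‖Q‖)).le ((q-2)/2)
  have hV2 := pow_le_pow_left₀ (mul_nonneg (mul_nonneg (by linarith) hgT) (norm_nonneg _)) hV 2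
  rw [mul_pow, mul_pow, sq_clamp_rpow_half hem] at hV2
  have haT := Real.rpow_nonneg (clamp_pos (ep := ep) hem (‖P‖ + ‖Q‖)).le (q-2)
  calc ⟪relaxedPow (q-2) em ep P - relaxedPow (q-2) em ep Q, P - Q⟫
      ≤ ‖relaxedPow (q-2) em ep P - relaxedPow (q-2) em ep Q‖ * ‖P - Q‖ := real_inner_le_norm _ _
    _ ≤ 5 * clamp em ep (‖P‖ + ‖Q‖) ^ (q-2) * ‖P - Q‖^2 := by
        nlinarith [mul_le_mul_of_nonneg_right hA (norm_nonneg (P - Q))]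
    _ ≤ 20 * ‖relaxedPow ((q-2)/2) em ep P - relaxedPow ((q-2)/2) em ep Q‖^2 := by
        have hq : 1/4 ≤ (1 + (q-2)/2)^2 := by nlinarith
        nlinarith [mul_le_mul_of_nonneg_right hq (mul_nonneg haT (sq_nonneg ‖P - Q‖))]

lemma norm_relaxedPow_sub_sq_le (hq₁ : 1 < q) (hq₂ : q < 2) (hem : 0 < em) (hee : em ≤ ep)
    (P Q : E) :
    (q-1)/50 * ‖relaxedPow ((q-2)/2) em ep P - relaxedPow ((q-2)/2) em ep Q‖^2
      ≤ bregman q em ep P Q := by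
  have hV := norm_relaxedPow_sub_le (r := (q-2)/2) hem hee (by linarith) (by linarith) P Q
  have hV2 := pow_le_pow_left₀ (norm_nonneg _) hV 2
  rw [mul_pow, mul_pow, sq_clamp_rpow_half hem] at hV2
  have := le_bregman hq₁ hq₂ hem hee P Q
  nlinarith

end Bregman

section Integrability

variable {α E : Type*} [MeasurableSpace α] {μ : Measure α} [NormedAddCommGroup E] {q r em ep : ℝ}
  {f g : α → E}

theorem _root_.MeasureTheory.MemLp.integrable_inner [InnerProductSpace ℝ E]
    (hf : MemLp f 2 μ) (hg : MemLp g 2 μ) : Integrable (fun x => ⟪f x, g x⟫) μ :=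
  (hf.norm.integrable_mul hg.norm).mono' (hf.1.inner hg.1)
    (ae_of_all _ fun _ => abs_real_inner_le_norm _ _)

lemma memLp_relaxedPow_comp [InnerProductSpace ℝ E] (hem : 0 < em) (hr : r ≤ 0) {p : ENNReal}
    (hf : MemLp f p μ) : MemLp (fun x => relaxedPow r em ep (f x)) p μ :=
  hf.of_le_mul ((continuous_relaxedPow hem).comp_aestronglyMeasurable hf.1)
    (ae_of_all _ fun x => norm_relaxedPow_le hem hr (f x))

lemma integrable_inner_relaxedPow_sub [InnerProductSpace ℝ E] (hem : 0 < em) (hr : r ≤ 0)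
    (hf : MemLp f 2 μ) (hg : MemLp g 2 μ) :
    Integrable (fun x => ⟪relaxedPow r em ep (f x) - relaxedPow r em ep (g x), f x - g x⟫) μ :=
  ((memLp_relaxedPow_comp hem hr hf).sub (memLp_relaxedPow_comp hem hr hg)).integrable_inner
    (hf.sub hg)

lemma integrable_norm_relaxedPow_sub_sq [InnerProductSpace ℝ E] (hem : 0 < em) (hr : r ≤ 0)
    (hf : MemLp f 2 μ) (hg : MemLp g 2 μ) :
    Integrable (fun x => ‖relaxedPow r em ep (f x) - relaxedPow r em ep (g x)‖^2) μ :=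
  have hfg := (memLp_relaxedPow_comp (ep := ep) hem hr hf).sub (memLp_relaxedPow_comp hem hr hg)
  (memLp_two_iff_integrable_sq_norm hfg.1).1 hfg

lemma integrableOn_kappaStar_norm (hq₁ : 1 < q) (hq₂ : q < 2) (hem : 0 < em) (hee : em ≤ ep)
    {Ω : Set α} (hΩ : μ Ω < ⊤) (hf : MemLp f 2 (μ.restrict Ω)) :
    IntegrableOn (fun x => kappaStar q em ep ‖f x‖) Ω μ :=
  ((integrableOn_const hΩ.ne).add
    (((memLp_two_iff_integrable_sq_norm hf.1).1 hf).const_mul (em ^ (q-2)))).mono'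
    ((continuous_kappaStar hem hee).comp_aestronglyMeasurable hf.1.norm)
    (ae_of_all _ fun x => abs_kappaStar_le hq₁ hq₂ hem hee (norm_nonneg (f x)))

lemma integrableOn_bregman [InnerProductSpace ℝ E] (hq₁ : 1 < q) (hq₂ : q < 2) (hem : 0 < em)
    (hee : em ≤ ep) {Ω : Set α} (hΩ : μ Ω < ⊤) (hf : MemLp f 2 (μ.restrict Ω))
    (hg : MemLp g 2 (μ.restrict Ω)) :
    IntegrableOn (fun x => bregman q em ep (f x) (g x)) Ω μ :=
  ((integrableOn_kappaStar_norm hq₁ hq₂ hem hee hΩ hf).sub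
    (integrableOn_kappaStar_norm hq₁ hq₂ hem hee hΩ hg)).sub
    ((memLp_relaxedPow_comp hem (by linarith) hg).integrable_inner (hf.sub hg))

lemma setIntegral_bregman [InnerProductSpace ℝ E] (hq₁ : 1 < q) (hq₂ : q < 2) (hem : 0 < em)
    (hee : em ≤ ep) {Ω : Set α} (hΩ : μ Ω < ⊤) (hf : MemLp f 2 (μ.restrict Ω))
    (hg : MemLp g 2 (μ.restrict Ω)) :
    ∫ x in Ω, bregman q em ep (f x) (g x) ∂μ
      = ∫ x in Ω, kappaStar q em ep ‖f x‖ ∂μ - ∫ x in Ω, kappaStar q em ep ‖g x‖ ∂μ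
        - ∫ x in Ω, ⟪relaxedPow (q-2) em ep (g x), f x - g x⟫ ∂μ := by
  rw [← integral_sub (integrableOn_kappaStar_norm hq₁ hq₂ hem hee hΩ hf)
    (integrableOn_kappaStar_norm hq₁ hq₂ hem hee hΩ hg), ← integral_sub]
  · rfl
  · exact (integrableOn_kappaStar_norm hq₁ hq₂ hem hee hΩ hf).sub
      (integrableOn_kappaStar_norm hq₁ hq₂ hem hee hΩ hg)
  · exact (memLp_relaxedPow_comp hem (by linarith) hg).integrable_inner (hf.sub hg)

end Integrability

lemma Astar_eq_relaxedPow (q em ep : ℝ) (d : ℕ) :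
    Astar q em ep (d := d) = relaxedPow (q-2) em ep := rfl

lemma Vstar_eq_relaxedPow (q em ep : ℝ) (d : ℕ) :
    Vstar q em ep (d := d) = relaxedPow ((q-2)/2) em ep := rfl

end RelaxedDual

open RelaxedDual

/-- natural distance. For `1 < q < 2` there are constants `0 < c ≤ C < ∞`
depending solely on `q` (independent of `ε`) such that: whenever `Ω ⊂ ℝ^d` is measurable of
finite measure and `σ_ε, τ ∈ L²(Ω;ℝ^d)` satisfy the Euler–Lagrange orthogonality
`∫_Ω A*_ε(σ_ε)·(τ - σ_ε) dx = 0`, one has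
`J*_ε(τ) - J*_ε(σ_ε) ≤ ∫_Ω (A*_ε(τ)-A*_ε(σ_ε))·(τ-σ_ε) dx ≤ C ∫_Ω |V*_ε(τ)-V*_ε(σ_ε)|² dx`
and `c ∫_Ω |V*_ε(τ)-V*_ε(σ_ε)|² dx ≤ J*_ε(τ) - J*_ε(σ_ε)`. -/
theorem stmt9 (q : ℝ) (hq1 : 1 < q) (hq2 : q < 2) :
    ∃ c C : ℝ, 0 < c ∧ c ≤ C ∧
      ∀ (d : ℕ) (em ep : ℝ), 0 < em → em ≤ ep →
        ∀ (Ω : Set (EuclideanSpace ℝ (Fin d))), MeasurableSet Ω → volume Ω < ⊤ →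
          ∀ (σe τ : EuclideanSpace ℝ (Fin d) → EuclideanSpace ℝ (Fin d)),
            Measurable σe → Measurable τ →
            IntegrableOn (fun x => ‖σe x‖ ^ 2) Ω volume →
            IntegrableOn (fun x => ‖τ x‖ ^ 2) Ω volume →
            (∫ x in Ω, ⟪Astar q em ep (σe x), τ x - σe x⟫) = 0 →
            (Jeps q em ep Ω τ - Jeps q em ep Ω σe
                ≤ ∫ x in Ω, ⟪Astar q em ep (τ x) - Astar q em ep (σe x), τ x - σe x⟫) ∧
            ((∫ x in Ω, ⟪Astar q em ep (τ x) - Astar q em ep (σe x), τ x - σe x⟫)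
                ≤ C * ∫ x in Ω, ‖Vstar q em ep (τ x) - Vstar q em ep (σe x)‖ ^ 2) ∧
            (c * (∫ x in Ω, ‖Vstar q em ep (τ x) - Vstar q em ep (σe x)‖ ^ 2)
                ≤ Jeps q em ep Ω τ - Jeps q em ep Ω σe) := by
  refine ⟨(q-1)/50, 20, by linarith, by linarith, ?_⟩
  intro d em ep hem hee Ω _ hΩ σe τ hσm hτm hσ2 hτ2 horth
  simp only [Astar_eq_relaxedPow, Vstar_eq_relaxedPow] at horth ⊢
  have hσ := (memLp_two_iff_integrable_sq_norm hσm.aestronglyMeasurable).2 hσ2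
  have hτ := (memLp_two_iff_integrable_sq_norm hτm.aestronglyMeasurable).2 hτ2
  have hD := integrableOn_bregman hq1 hq2 hem hee hΩ hτ hσ
  have hM := integrable_inner_relaxedPow_sub (ep := ep) (r := q-2) hem (by linarith) hτ hσ
  have hW := integrable_norm_relaxedPow_sub_sq (ep := ep) (r := (q-2)/2) hem (by linarith) hτ hσ
  have hJ : Jeps q em ep Ω τ - Jeps q em ep Ω σe = ∫ x in Ω, bregman q em ep (τ x) (σe x) := by
    rw [setIntegral_bregman hq1 hq2 hem hee hΩ hτ hσ, horth, sub_zero, Jeps, Jeps]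
  rw [hJ, ← integral_const_mul, ← integral_const_mul]
  exact ⟨setIntegral_mono hD hM fun x => bregman_le_inner hq1 hq2 hem hee (τ x) (σe x),
    setIntegral_mono hM (hW.const_mul _) fun x =>
      inner_relaxedPow_sub_le hq1 hq2 hem hee (τ x) (σe x),
    setIntegral_mono (hW.const_mul _) hD fun x =>
      norm_relaxedPow_sub_sq_le hq1 hq2 hem hee (τ x) (σe x)⟩
end

section
/- Fix q with 1 < q < 2, reals α, β > 0 with α + β ≤ 1/(2-q), a constant C ≥ 1, constants c_R < ∞ and r > 2 ≥ q. For n ∈ ℕ set ε_{n,-} = (n+1)^{-α}, ε_{n,+} = (n+1)^{β}, and δ_n = C^{-1}(ε_{n,-}/ε_{n,+})^{2-q}. Let (e_n)_{n ∈ ℕ} be a sequence of nonnegative reals satisfying the recursion e_{n+1} ≤ (1 - δ_n) e_n + δ_n c_R (ε_{n,-}^q + ε_{n,+}^{-(r-q)}) for all n ∈ ℕ. Then there exist constants 0 < c and C' < ∞, depending only on α, β, r, q, C, c_R, and e_0, such that e_n ≤ C' n^{-1/c} for all n ≥ 1. -/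
open Real

private lemma stmt13_bern (x γ : ℝ) (hx : 1 ≤ x) (hγ0 : 0 < γ) (hγ1 : γ ≤ 1) :
    x ^ (-γ) * (1 - γ / x) ≤ (x + 1) ^ (-γ) := by
  have hx0 : (0:ℝ) < x := lt_of_lt_of_le one_pos hx
  by_cases h : 1 - γ / x ≤ 0
  · have h1 : x ^ (-γ) * (1 - γ / x) ≤ 0 :=
      mul_nonpos_of_nonneg_of_nonpos (rpow_nonneg hx0.le _) h
    exact h1.trans (rpow_nonneg (by linarith) _)
  push_neg at h
  have hB : (1 + 1/x) ^ γ ≤ 1 + γ * (1/x) :=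
    rpow_one_add_le_one_add_mul_self
      (by have : (0:ℝ) < 1/x := by positivity
          linarith) hγ0.le hγ1
  have hpow_pos : (0:ℝ) < (1 + 1/x) ^ γ := rpow_pos_of_pos (by positivity) _
  have hγx : γ / x = γ * (1/x) := by ring
  have hm : (1 - γ / x) * (1 + 1/x) ^ γ ≤ 1 := by
    calc (1 - γ / x) * (1 + 1/x) ^ γ ≤ (1 - γ / x) * (1 + γ * (1/x)) :=
          mul_le_mul_of_nonneg_left hB h.le
      _ ≤ 1 := by rw [← hγx]; nlinarith [sq_nonneg (γ / x)]
  have key : (1 - γ / x) ≤ (1 + 1/x) ^ (-γ) := by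
    rw [rpow_neg (by positivity : (0:ℝ) ≤ 1 + 1/x), inv_eq_one_div,
      le_div_iff₀ hpow_pos]
    exact hm
  have hsplit : (x + 1) ^ (-γ) = x ^ (-γ) * (1 + 1/x) ^ (-γ) := by
    rw [← Real.mul_rpow hx0.le (by positivity : (0:ℝ) ≤ 1 + 1/x)]
    congr 1
    field_simp
  rw [hsplit]
  exact mul_le_mul_of_nonneg_left key (rpow_nonneg hx0.le _)

set_option maxHeartbeats 1000000

/-- algebraic rate. Fix `1 < q < 2`, `α, β > 0` with
`α + β ≤ 1/(2-q)`, `C ≥ 1`, `c_R < ∞` and `r > 2 ≥ q`.  With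
`ε_{n,-} = (n+1)^{-α}`, `ε_{n,+} = (n+1)^β` and `δ_n = C⁻¹ (ε_{n,-}/ε_{n,+})^(2-q)`,
any nonnegative sequence `(e_n)` satisfying
`e_{n+1} ≤ (1-δ_n) e_n + δ_n c_R (ε_{n,-}^q + ε_{n,+}^{-(r-q)})`
obeys `e_n ≤ C' n^{-1/c}` for all `n ≥ 1`, for constants `0 < c` and `C' < ∞` depending
only on `α, β, r, q, C, c_R` and `e_0`. -/
theorem stmt13 (q α β C cR r : ℝ) (hq1 : 1 < q) (hq2 : q < 2)
    (hα : 0 < α) (hβ : 0 < β) (hαβ : α + β ≤ 1 / (2 - q)) (hC : 1 ≤ C) (hr : 2 < r)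
    (e : ℕ → ℝ) (hpos : ∀ n : ℕ, 0 ≤ e n)
    (hrec : ∀ n : ℕ,
      e (n+1) ≤ (1 - C⁻¹ * (((n : ℝ) + 1) ^ (-α) / ((n : ℝ) + 1) ^ β) ^ (2-q)) * e n
        + C⁻¹ * (((n : ℝ) + 1) ^ (-α) / ((n : ℝ) + 1) ^ β) ^ (2-q) * cR *
            ((((n : ℝ) + 1) ^ (-α)) ^ q + (((n : ℝ) + 1) ^ β) ^ (-(r - q)))) :
    ∃ c C' : ℝ, 0 < c ∧ 0 < C' ∧ ∀ n : ℕ, 1 ≤ n → e n ≤ C' * (n : ℝ) ^ (-(1 / c)) := by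
  have hC0 : (0:ℝ) < C := lt_of_lt_of_le one_pos hC
  have h2q : (0:ℝ) < 2 - q := by linarith
  obtain ⟨K, hK⟩ : ∃ K, K = |cR| := ⟨_, rfl⟩
  have hK0 : 0 ≤ K := hK ▸ abs_nonneg cR
  have hcRK : cR ≤ K := hK ▸ le_abs_self cR
  obtain ⟨M, hM⟩ : ∃ M, M = 4 * K + e 0 + 1 := ⟨_, rfl⟩
  have hM0 : (0:ℝ) < M := by have := hpos 0; rw [hM]; linarith
  obtain ⟨θ, hθ⟩ : ∃ θ, θ = (α + β) * (2 - q) := ⟨_, rfl⟩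
  have hθ0 : 0 < θ := by rw [hθ]; positivity
  have hθ1 : θ ≤ 1 := by
    have h1 : (α + β) * (2 - q) ≤ (1 / (2 - q)) * (2 - q) :=
      mul_le_mul_of_nonneg_right hαβ h2q.le
    rw [one_div, inv_mul_cancel₀ h2q.ne'] at h1
    rw [hθ]; exact h1
  obtain ⟨ρ, hρdef⟩ : ∃ ρ, ρ = min (α * q) (β * (r - q)) := ⟨_, rfl⟩
  have hρ0 : 0 < ρ := hρdef ▸ lt_min (by positivity) (by nlinarith)
  have hnum : (0:ℝ) < 2 * K + e 0 + 1 := by have := hpos 0; linarith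
  obtain ⟨γ, hγdef⟩ : ∃ γ, γ = min ρ (min 1 ((2 * K + e 0 + 1) / (C * M))) := ⟨_, rfl⟩
  have hγ0 : 0 < γ := hγdef ▸ lt_min hρ0 (lt_min one_pos (by positivity))
  have hγ1 : γ ≤ 1 := hγdef ▸ le_trans (min_le_right _ _) (min_le_left _ _)
  have hγρ : γ ≤ ρ := hγdef ▸ min_le_left _ _
  have hγαq : γ ≤ α * q := hγρ.trans (hρdef ▸ min_le_left _ _)
  have hγβ : γ ≤ β * (r - q) := hγρ.trans (hρdef ▸ min_le_right _ _)
  have hγM : C * (γ * M) ≤ M - 2 * K := by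
    have h1 : γ ≤ (2 * K + e 0 + 1) / (C * M) :=
      hγdef ▸ le_trans (min_le_right _ _) (min_le_right _ _)
    have h2 : γ * (C * M) ≤ 2 * K + e 0 + 1 := by
      rw [← le_div_iff₀ (by positivity)]; exact h1
    nlinarith [h2]
  have hMK : 0 < M - 2 * K := by rw [hM]; have := hpos 0; linarith
  -- main induction
  have H : ∀ n : ℕ, e n ≤ M * ((n : ℝ) + 1) ^ (-γ) := by
    intro n
    induction n with
    | zero =>
      simp only [Nat.cast_zero, zero_add, Real.one_rpow, mul_one]
      rw [hM]; linarith [hpos 0]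
    | succ n ih =>
      have hx : (1:ℝ) ≤ (n : ℝ) + 1 := by
        have : (0:ℝ) ≤ (n:ℝ) := Nat.cast_nonneg n
        linarith
      have hx0 : (0:ℝ) < (n : ℝ) + 1 := lt_of_lt_of_le one_pos hx
      obtain ⟨x, hxdef⟩ : ∃ x : ℝ, x = (n : ℝ) + 1 := ⟨_, rfl⟩
      rw [← hxdef] at hx hx0 ih
      obtain ⟨t, htdef⟩ : ∃ t : ℝ, t = x ^ (-γ) := ⟨_, rfl⟩
      have ht0 : (0:ℝ) ≤ t := htdef ▸ rpow_nonneg hx0.le _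
      obtain ⟨D, hDdef⟩ : ∃ D : ℝ, D = C⁻¹ * x ^ (-θ) := ⟨_, rfl⟩
      -- rewrite the recursion
      have hDeq : C⁻¹ * (x ^ (-α) / x ^ β) ^ (2 - q) = D := by
        rw [← Real.rpow_sub hx0, ← Real.rpow_mul hx0.le, hDdef]
        congr 2
        rw [hθ]; ring
      have hterm1 : (x ^ (-α)) ^ q = x ^ (-(α * q)) := by
        rw [← Real.rpow_mul hx0.le]; congr 1; ring
      have hterm2 : (x ^ β) ^ (-(r - q)) = x ^ (-(β * (r - q))) := by
        rw [← Real.rpow_mul hx0.le]; congr 1; ring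
      have hrec' : e (n + 1)
          ≤ (1 - D) * e n + D * (cR * (x ^ (-(α * q)) + x ^ (-(β * (r - q))))) := by
        have h := hrec n
        rw [← hxdef, hDeq, hterm1, hterm2] at h
        linarith [h]
      -- bounds on D
      have hD0 : 0 ≤ D := by rw [hDdef]; positivity
      have hD1 : D ≤ 1 := by
        have h1 : x ^ (-θ) ≤ x ^ (0:ℝ) :=
          Real.rpow_le_rpow_of_exponent_le hx (by linarith)
        rw [Real.rpow_zero] at h1
        have h2 : C⁻¹ ≤ 1 := inv_le_one_of_one_le₀ hC
        rw [hDdef]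
        calc C⁻¹ * x ^ (-θ) ≤ 1 * 1 :=
              mul_le_mul h2 h1 (rpow_nonneg hx0.le _) (by norm_num)
          _ = 1 := by norm_num
      have hDlow : C⁻¹ * x⁻¹ ≤ D := by
        have h1 : x ^ (-1 : ℝ) ≤ x ^ (-θ) :=
          Real.rpow_le_rpow_of_exponent_le hx (by linarith)
        rw [Real.rpow_neg_one] at h1
        rw [hDdef]
        exact mul_le_mul_of_nonneg_left h1 (by positivity)
      -- bound on forcing
      have hS1 : x ^ (-(α * q)) ≤ t := by
        rw [htdef]
        exact Real.rpow_le_rpow_of_exponent_le hx (by linarith)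
      have hS2 : x ^ (-(β * (r - q))) ≤ t := by
        rw [htdef]
        exact Real.rpow_le_rpow_of_exponent_le hx (by linarith)
      have hSnn : (0:ℝ) ≤ x ^ (-(α * q)) + x ^ (-(β * (r - q))) := by positivity
      have hcRS : cR * (x ^ (-(α * q)) + x ^ (-(β * (r - q)))) ≤ K * (2 * t) := by
        have h1 : cR * (x ^ (-(α * q)) + x ^ (-(β * (r - q))))
            ≤ K * (x ^ (-(α * q)) + x ^ (-(β * (r - q)))) :=
          mul_le_mul_of_nonneg_right hcRK hSnn
        have h2 : K * (x ^ (-(α * q)) + x ^ (-(β * (r - q)))) ≤ K * (2 * t) :=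
          mul_le_mul_of_nonneg_left (by linarith) hK0
        linarith
      have step1 : e (n + 1) ≤ (1 - D) * (M * t) + D * (K * (2 * t)) := by
        have h1 : (1 - D) * e n ≤ (1 - D) * (M * t) := by
          rw [htdef]; exact mul_le_mul_of_nonneg_left ih (by linarith)
        have h2 : D * (cR * (x ^ (-(α * q)) + x ^ (-(β * (r - q)))))
            ≤ D * (K * (2 * t)) := mul_le_mul_of_nonneg_left hcRS hD0
        linarith [hrec']
      have step2 : (1 - D) * (M * t) + D * (K * (2 * t))
          ≤ M * t - (γ * M) * (x⁻¹ * t) := by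
        have hw : (0:ℝ) ≤ x⁻¹ * t := by positivity
        have hγM' : γ * M ≤ C⁻¹ * (M - 2 * K) := by
          rw [inv_mul_eq_div, le_div_iff₀ hC0]
          calc γ * M * C = C * (γ * M) := by ring
            _ ≤ M - 2 * K := hγM
        have h3 : (γ * M) * (x⁻¹ * t) ≤ (C⁻¹ * (M - 2 * K)) * (x⁻¹ * t) :=
          mul_le_mul_of_nonneg_right hγM' hw
        have h4 : (C⁻¹ * x⁻¹) * ((M - 2 * K) * t) ≤ D * ((M - 2 * K) * t) :=
          mul_le_mul_of_nonneg_right hDlow (mul_nonneg hMK.le ht0)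
        have e1 : (1 - D) * (M * t) + D * (K * (2 * t))
            = M * t - D * ((M - 2 * K) * t) := by ring
        have e2 : (C⁻¹ * (M - 2 * K)) * (x⁻¹ * t)
            = (C⁻¹ * x⁻¹) * ((M - 2 * K) * t) := by ring
        rw [e1]
        linarith [h3, h4, e2.le, e2.ge]
      have step3 : M * t - (γ * M) * (x⁻¹ * t) = M * (t * (1 - γ / x)) := by
        rw [div_eq_mul_inv]; ring
      have step4 : M * (t * (1 - γ / x)) ≤ M * ((x + 1) ^ (-γ)) := by
        rw [htdef]
        exact mul_le_mul_of_nonneg_left (stmt13_bern x γ hx hγ0 hγ1) hM0.le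
      have hfin : e (n + 1) ≤ M * ((x + 1) ^ (-γ)) := by
        rw [← step3] at step4; linarith [step1, step2, step4]
      have hcast : (((n + 1 : ℕ) : ℝ) + 1) = x + 1 := by rw [hxdef]; push_cast; ring
      rw [hcast]
      exact hfin
  refine ⟨1 / γ, M, by positivity, hM0, fun n hn => ?_⟩
  have hexp : -(1 / (1 / γ)) = -γ := by rw [one_div_one_div]
  rw [hexp]
  have hn1 : (1:ℝ) ≤ (n:ℝ) := by exact_mod_cast hn
  have h1 : ((n:ℝ) + 1) ^ (-γ) ≤ (n:ℝ) ^ (-γ) :=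
    Real.rpow_le_rpow_of_nonpos (by linarith) (by linarith) (by linarith)
  calc e n ≤ M * ((n:ℝ) + 1) ^ (-γ) := H n
    _ ≤ M * (n:ℝ) ^ (-γ) := mul_le_mul_of_nonneg_left h1 hM0.le
end

section
/- Fix q with 1 < q < 2, let p = q/(q-1) be the conjugate exponent, and fix a relaxation interval ε = [ε₋, ε₊] with 0 < ε₋ ≤ ε₊ < ∞. Then for every t ≥ 0 the convex conjugate κ_ε(t) := sup_{r ≥ 0} (r·t - κ*_ε(r)) is given by: κ_ε(t) = (1/2)ε₋^{2-q} t² - (1/q - 1/2)ε₋^q if t^p ≤ ε₋^q; κ_ε(t) = (1/p) t^p if ε₋^q ≤ t^p ≤ ε₊^q; and κ_ε(t) = (1/2)ε₊^{2-q} t² - (1/q - 1/2)ε₊^q if ε₊^q ≤ t^p. -/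
/-!
The supremum of `r t - κ*_ε(r)` is attained where the slope of `κ*_ε` equals `t`: at
`r = ε₋^(2-q) t`, `r = t^(p-1)` or `r = ε₊^(2-q) t` according to the regime of `t`. On a quadratic
piece the upper bound comes from completing the square. Elsewhere one uses `κ*_ε(r) ≥ r^q / q`
(for `q ≤ 2` each quadratic piece lies above the power it touches to first order), and then
either Young's inequality, or the tangent-line inequality for `r ^ q` at `ε₋` resp. `ε₊`, which
shows that `r t - r^q / q` decreases past `ε₋` when `t ≤ ε₋^(q-1)` and increases up to `ε₊` when
`t ≥ ε₊^(q-1)`.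
-/

open Real

open Set

/-- The quadratic that agrees with `r ↦ r ^ q / q` to first order at `r = a`. -/
noncomputable def quadRelax (q a r : ℝ) : ℝ := (1/2) * a ^ (q-2) * r^2 + (1/q - 1/2) * a ^ q

noncomputable def quadRelaxConj (q a t : ℝ) : ℝ := (1/2) * a ^ (2-q) * t^2 - (1/q - 1/2) * a ^ q

section

variable {p q a em ep r t : ℝ}

lemma rpow_add_mul_sub_le_rpow (hq : 1 ≤ q) (ha : 0 < a) (hr : 0 ≤ r) :
    a ^ q + q * a ^ (q-1) * (r - a) ≤ r ^ q := by
  have hbern := one_add_mul_self_le_rpow_one_add (s := r / a - 1)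
    (by linarith [div_nonneg hr ha.le]) hq
  rw [add_sub_cancel, div_rpow hr ha.le, le_div_iff₀ (rpow_pos_of_pos ha q)] at hbern
  have ha_pow : a ^ (q-1) * a = a ^ q := by rw [← rpow_add_one ha.ne']; norm_num
  calc a ^ q + q * a ^ (q-1) * (r - a) = (1 + q * (r / a - 1)) * a ^ q := by
        field_simp
        linear_combination (q * r - q * a) * ha_pow
    _ ≤ r ^ q := hbern

lemma mul_sub_rpow_le (hq : 1 < q) (ha : 0 < a) (hr : 0 ≤ r) :
    r * t - (1/q) * r ^ q ≤ a * t - (1/q) * a ^ q + (r - a) * (t - a ^ (q-1)) := by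
  have htangent := mul_le_mul_of_nonneg_left (rpow_add_mul_sub_le_rpow hq.le ha hr)
    (by positivity : (0:ℝ) ≤ 1/q)
  have hexpand : (1/q) * (a ^ q + q * a ^ (q-1) * (r - a))
      = (1/q) * a ^ q + a ^ (q-1) * (r - a) := by
    field_simp
  linarith

lemma rpow_le_quadRelax (hq0 : 0 < q) (hq2 : q ≤ 2) (ha : 0 < a) (hr : 0 ≤ r) :
    (1/q) * r ^ q ≤ quadRelax q a r := by
  have hbern := rpow_one_add_le_one_add_mul_self (s := r^2 / a^2 - 1)
    (by linarith [div_nonneg (sq_nonneg r) (sq_nonneg a)]) (by linarith : (0:ℝ) ≤ q/2)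
    (by linarith : q/2 ≤ 1)
  have hsq : (r^2 / a^2 : ℝ) ^ (q/2) = r ^ q / a ^ q := by
    rw [← div_pow, ← rpow_natCast, ← rpow_mul (div_nonneg hr ha.le), div_rpow hr ha.le]
    norm_num [show 2 * (q/2) = q by ring]
  rw [add_sub_cancel, hsq, div_le_iff₀ (rpow_pos_of_pos ha q)] at hbern
  have ha_pow : a ^ (q-2) * a ^ 2 = a ^ q := by
    rw [← rpow_natCast a 2, ← rpow_add ha]; norm_num
  calc (1/q) * r ^ q ≤ (1/q) * ((1 + q/2 * (r^2 / a^2 - 1)) * a ^ q) := by gcongr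
    _ = quadRelax q a r := by
      unfold quadRelax
      field_simp
      linear_combination (-q * r^2) * ha_pow

lemma quadRelax_self (ha : 0 < a) : quadRelax q a a = (1/q) * a ^ q := by
  have ha_pow : a ^ (q-2) * a ^ 2 = a ^ q := by
    rw [← rpow_natCast a 2, ← rpow_add ha]; norm_num
  unfold quadRelax
  linear_combination (1/2) * ha_pow

lemma mul_sub_quadRelax_le (ha : 0 < a) : r * t - quadRelax q a r ≤ quadRelaxConj q a t := by
  have hinv : a ^ (q-2) * a ^ (2-q) = 1 := by rw [← rpow_add ha]; norm_num
  have hsq := mul_nonneg (rpow_pos_of_pos ha (q-2)).le (sq_nonneg (r - a ^ (2-q) * t))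
  have hexpand : a ^ (q-2) * (r - a ^ (2-q) * t) ^ 2
      = a ^ (q-2) * r^2 - 2 * (r * t) + a ^ (2-q) * t^2 := by
    linear_combination (t^2 * a ^ (2-q) - 2 * r * t) * hinv
  unfold quadRelax quadRelaxConj
  linarith

lemma mul_sub_quadRelax_eq (ha : 0 < a) :
    a ^ (2-q) * t * t - quadRelax q a (a ^ (2-q) * t) = quadRelaxConj q a t := by
  have hinv : a ^ (q-2) * a ^ (2-q) = 1 := by rw [← rpow_add ha]; norm_num
  unfold quadRelax quadRelaxConj
  linear_combination (-(1/2) * t^2 * a ^ (2-q)) * hinv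

lemma rpow_le_rpow_iff_le_rpow_sub_one (hqp : q.HolderConjugate p) (ht : 0 ≤ t) (ha : 0 ≤ a) :
    t ^ p ≤ a ^ q ↔ t ≤ a ^ (q-1) := by
  rw [← rpow_le_rpow_iff ht (rpow_nonneg ha _) hqp.symm.pos, ← rpow_mul ha,
    hqp.sub_one_mul_conj]

lemma kappaStar_of_le (h : r ≤ em) : kappaStar q em ep r = quadRelax q em r := if_pos h

lemma kappaStar_of_lt_of_le (h₁ : em < r) (h₂ : r ≤ ep) :
    kappaStar q em ep r = (1/q) * r ^ q := by
  rw [kappaStar, if_neg h₁.not_ge, if_pos h₂]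

lemma kappaStar_of_lt (hemep : em ≤ ep) (h : ep < r) :
    kappaStar q em ep r = quadRelax q ep r := by
  rw [kappaStar, if_neg (hemep.trans_lt h).not_ge, if_neg h.not_ge]; rfl

lemma rpow_le_kappaStar (hq0 : 0 < q) (hq2 : q ≤ 2) (hem : 0 < em) (hep : 0 < ep)
    (hr : 0 ≤ r) :
    (1/q) * r ^ q ≤ kappaStar q em ep r := by
  unfold kappaStar
  split_ifs
  · exact rpow_le_quadRelax hq0 hq2 hem hr
  · exact le_rfl
  · exact rpow_le_quadRelax hq0 hq2 hep hr

lemma isGreatest_kappaStar_conj_of_le (hq1 : 1 < q) (hq2 : q ≤ 2) (hem : 0 < em) (hep : 0 < ep)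
    (ht : 0 ≤ t) (htem : t ≤ em ^ (q-1)) :
    IsGreatest ((fun r => r * t - kappaStar q em ep r) '' Ici 0) (quadRelaxConj q em t) := by
  refine ⟨⟨em ^ (2-q) * t, mem_Ici.2 (by positivity), ?_⟩, forall_mem_image.2 fun r hr => ?_⟩
  · have hle : em ^ (2-q) * t ≤ em :=
      calc em ^ (2-q) * t ≤ em ^ (2-q) * em ^ (q-1) := by gcongr
        _ = em := by rw [← rpow_add hem]; norm_num
    simp only [kappaStar_of_le hle, mul_sub_quadRelax_eq hem]
  · rcases le_or_gt r em with hrem | hemr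
    · simp only [kappaStar_of_le hrem, mul_sub_quadRelax_le hem]
    · have hdecr : (r - em) * (t - em ^ (q-1)) ≤ 0 :=
        mul_nonpos_of_nonneg_of_nonpos (by linarith) (by linarith)
      calc r * t - kappaStar q em ep r ≤ r * t - (1/q) * r ^ q := by
            linarith [rpow_le_kappaStar (zero_lt_one.trans hq1) hq2 hem hep hr]
        _ ≤ em * t - quadRelax q em em := by
            linarith [mul_sub_rpow_le (t := t) hq1 hem hr, quadRelax_self (q := q) hem]
        _ ≤ quadRelaxConj q em t := mul_sub_quadRelax_le hem

lemma isGreatest_kappaStar_conj_of_lt_of_le (hpq : p.HolderConjugate q) (hq2 : q ≤ 2)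
    (hem : 0 < em) (hemep : em ≤ ep) (htem : em ^ (q-1) < t) (htep : t ≤ ep ^ (q-1)) :
    IsGreatest ((fun r => r * t - kappaStar q em ep r) '' Ici 0) ((1/p) * t ^ p) := by
  have hep := hem.trans_le hemep
  have ht : 0 < t := (rpow_pos_of_pos hem _).trans htem
  have hpq_exp : (q - 1) * (p - 1) = 1 := by linear_combination hpq.symm.mul_eq_add
  refine ⟨⟨t ^ (p-1), mem_Ici.2 (by positivity), ?_⟩, forall_mem_image.2 fun r hr => ?_⟩
  · have hlt : em < t ^ (p-1) := by
      simpa [← rpow_mul hem.le, hpq_exp] using rpow_lt_rpow (by positivity) htem hpq.sub_one_pos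
    have hle : t ^ (p-1) ≤ ep := by
      simpa [← rpow_mul hep.le, hpq_exp] using rpow_le_rpow ht.le htep hpq.sub_one_pos.le
    have hmul : t ^ (p-1) * t = t ^ p := by rw [← rpow_add_one ht.ne']; norm_num
    have hpow : (t ^ (p-1)) ^ q = t ^ p := by rw [← rpow_mul ht.le, hpq.sub_one_mul_conj]
    simp only [kappaStar_of_lt_of_le hlt hle, hmul, hpow]
    linear_combination t ^ p * hpq.symm.one_sub_inv
  · have hyoung := young_inequality_of_nonneg ht.le hr hpq
    calc r * t - kappaStar q em ep r ≤ r * t - (1/q) * r ^ q := by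
          linarith [rpow_le_kappaStar (zero_lt_one.trans hpq.symm.lt) hq2 hem hep hr]
      _ = t * r - r ^ q / q := by ring
      _ ≤ t ^ p / p := by linarith
      _ = (1/p) * t ^ p := by ring

lemma isGreatest_kappaStar_conj_of_lt (hq1 : 1 < q) (hq2 : q ≤ 2) (hem : 0 < em)
    (hemep : em ≤ ep) (htep : ep ^ (q-1) < t) :
    IsGreatest ((fun r => r * t - kappaStar q em ep r) '' Ici 0) (quadRelaxConj q ep t) := by
  have hep := hem.trans_le hemep
  have ht : 0 < t := (rpow_pos_of_pos hep _).trans htep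
  refine ⟨⟨ep ^ (2-q) * t, mem_Ici.2 (by positivity), ?_⟩, forall_mem_image.2 fun r hr => ?_⟩
  · have hlt : ep < ep ^ (2-q) * t :=
      calc ep = ep ^ (2-q) * ep ^ (q-1) := by rw [← rpow_add hep]; norm_num
        _ < ep ^ (2-q) * t := by gcongr
    simp only [kappaStar_of_lt hemep hlt, mul_sub_quadRelax_eq hep]
  · rcases le_or_gt r ep with hrep | hepr
    · have hincr : (r - ep) * (t - ep ^ (q-1)) ≤ 0 :=
        mul_nonpos_of_nonpos_of_nonneg (by linarith) (by linarith)
      calc r * t - kappaStar q em ep r ≤ r * t - (1/q) * r ^ q := by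
            linarith [rpow_le_kappaStar (zero_lt_one.trans hq1) hq2 hem hep hr]
        _ ≤ ep * t - quadRelax q ep ep := by
            linarith [mul_sub_rpow_le (t := t) hq1 hep hr, quadRelax_self (q := q) hep]
        _ ≤ quadRelaxConj q ep t := mul_sub_quadRelax_le hep
    · simp only [kappaStar_of_lt hemep hepr, mul_sub_quadRelax_le hep]

end

/-- convex conjugate of the relaxed integrand. For `1 < q < 2`,
`p = q/(q-1)` and `0 < ε₋ ≤ ε₊ < ∞`, the convex conjugate
`κ_ε(t) = sup_{r ≥ 0} (r t - κ*_ε(r))` equals, for `t ≥ 0`: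
`(1/2) ε₋^(2-q) t² - (1/q - 1/2) ε₋^q` if `t^p ≤ ε₋^q`,
`(1/p) t^p` if `ε₋^q ≤ t^p ≤ ε₊^q`, and
`(1/2) ε₊^(2-q) t² - (1/q - 1/2) ε₊^q` if `ε₊^q ≤ t^p`. -/
theorem stmt15 (q em ep p : ℝ) (hq1 : 1 < q) (hq2 : q < 2) (hem : 0 < em) (hemep : em ≤ ep)
    (hp : p = q / (q - 1)) (t : ℝ) (ht : 0 ≤ t) :
    sSup ((fun r => r * t - kappaStar q em ep r) '' Set.Ici (0 : ℝ)) =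
      if t ^ p ≤ em ^ q then (1/2) * em ^ (2-q) * t^2 - (1/q - 1/2) * em ^ q
      else if t ^ p ≤ ep ^ q then (1/p) * t ^ p
      else (1/2) * ep ^ (2-q) * t^2 - (1/q - 1/2) * ep ^ q := by
  have hqp : q.HolderConjugate p := (holderConjugate_iff_eq_conjExponent hq1).2 hp
  have hep := hem.trans_le hemep
  split_ifs with htem htep
  · rw [rpow_le_rpow_iff_le_rpow_sub_one hqp ht hem.le] at htem
    exact (isGreatest_kappaStar_conj_of_le hq1 hq2.le hem hep ht htem).csSup_eq
  · rw [rpow_le_rpow_iff_le_rpow_sub_one hqp ht hem.le, not_le] at htem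
    rw [rpow_le_rpow_iff_le_rpow_sub_one hqp ht hep.le] at htep
    exact (isGreatest_kappaStar_conj_of_lt_of_le hqp.symm hq2.le hem hemep htem htep).csSup_eq
  · rw [rpow_le_rpow_iff_le_rpow_sub_one hqp ht hep.le, not_le] at htep
    exact (isGreatest_kappaStar_conj_of_lt hq1 hq2.le hem hemep htep).csSup_eq
end

section
/- Fix q with 1 < q < 2, a relaxation interval ε = [ε₋, ε₊] with 0 < ε₋ ≤ ε₊ < ∞, and let Ω ⊂ ℝ^d be a measurable set of finite Lebesgue measure. Let τ_n, τ_{n+1} ∈ L²(Ω; ℝ^d), set w_n = clamp_ε(|τ_n|)^{q-2}, and assume the orthogonality ∫_Ω w_n τ_{n+1}·(τ_n - τ_{n+1}) dx = 0. Then (1/2)∫_Ω w_n |τ_n - τ_{n+1}|² dx ≤ J*_ε(τ_n) - J*_ε(τ_{n+1}). -/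
open Real MeasureTheory
open scoped RealInnerProductSpace

lemma max_min_mem_Icc {em ep : ℝ} (hemep : em ≤ ep) (t : ℝ) :
    max em (min t ep) ∈ Set.Icc em ep :=
  ⟨le_max_left _ _, max_le hemep (min_le_right _ _)⟩

lemma max_min_mem_uIcc {em ep a : ℝ} (ha : a ∈ Set.Icc em ep) (t : ℝ) :
    max em (min t ep) ∈ Set.uIcc a t := by
  rw [Set.mem_uIcc]
  rcases le_total t a with hta | hat
  · exact Or.inr ⟨le_max_of_le_right (le_min le_rfl (hta.trans ha.2)),
      max_le ha.1 ((min_le_left _ _).trans hta)⟩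
  · exact Or.inl ⟨le_max_of_le_right (le_min hat ha.2),
      max_le (ha.1.trans hat) (min_le_left _ _)⟩

/-- `Q_a(t)`: the quadratic in `t` tangent to `t ↦ t ^ q / q` at `t = a`. -/
noncomputable def kappaQuad (q a t : ℝ) : ℝ :=
  (1/2) * a ^ (q-2) * t^2 + (1/q - 1/2) * a ^ q

lemma kappaQuad_self {q t : ℝ} (ht : 0 < t) : kappaQuad q t t = (1/q) * t ^ q := by
  have h : t ^ (q-2) * t^2 = t ^ q := by
    rw [← rpow_natCast, ← rpow_add ht]
    norm_num
  rw [kappaQuad]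
  linear_combination (1/2 : ℝ) * h

lemma kappaQuad_self_le {q a t : ℝ} (hq : 0 < q) (hq2 : q ≤ 2) (ha : 0 < a) (ht : 0 < t) :
    kappaQuad q t t ≤ kappaQuad q a t := by
  have hprod : (a ^ (q-2) * t^2) ^ (q/2) * (a ^ q) ^ (1 - q/2) = t ^ q := by
    rw [mul_rpow (by positivity) (by positivity), ← rpow_natCast t 2, ← rpow_mul ht.le,
      ← rpow_mul ha.le, ← rpow_mul ha.le, mul_right_comm, ← rpow_add ha,
      show (q-2) * (q/2) + q * (1 - q/2) = 0 by ring, rpow_zero, one_mul]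
    congr 1
    push_cast
    ring
  have hamgm := geom_mean_le_arith_mean2_weighted (by positivity) (by linarith)
    (by positivity : 0 ≤ a ^ (q-2) * t^2) (by positivity : 0 ≤ a ^ q) (add_sub_cancel (q/2) 1)
  rw [hprod] at hamgm
  rw [kappaQuad_self ht, kappaQuad]
  calc (1/q) * t ^ q ≤ (1/q) * (q/2 * (a ^ (q-2) * t^2) + (1 - q/2) * a ^ q) := by gcongr
    _ = _ := by field_simp

lemma kappaQuad_le_kappaQuad_of_mem_uIcc {q a b t : ℝ} (hq : 0 < q) (hq2 : q ≤ 2) (ha : 0 < a)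
    (hb : 0 < b) (ht : 0 ≤ t) (hbat : b ∈ Set.uIcc a t) :
    kappaQuad q b t ≤ kappaQuad q a t := by
  have hyoung := kappaQuad_self_le hq hq2 ha hb
  have hsign : 0 ≤ (a ^ (q-2) - b ^ (q-2)) * (t^2 - b^2) := by
    rcases Set.mem_uIcc.1 hbat with ⟨hab, hbt⟩ | ⟨htb, hba⟩
    · exact mul_nonneg (sub_nonneg.2 (rpow_le_rpow_of_nonpos ha hab (by linarith)))
        (sub_nonneg.2 (pow_le_pow_left₀ hb.le hbt 2))
    · exact mul_nonneg_of_nonpos_of_nonpos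
        (sub_nonpos.2 (rpow_le_rpow_of_nonpos hb hba (by linarith)))
        (sub_nonpos.2 (pow_le_pow_left₀ ht htb 2))
  have hsplit : kappaQuad q a t - kappaQuad q b t
      = (kappaQuad q a b - kappaQuad q b b)
        + (1/2) * ((a ^ (q-2) - b ^ (q-2)) * (t^2 - b^2)) := by
    simp only [kappaQuad]
    ring
  linarith

lemma kappaStar_eq_kappaQuad {q em ep : ℝ} (hem : 0 < em) (hemep : em ≤ ep) (t : ℝ) :
    kappaStar q em ep t = kappaQuad q (max em (min t ep)) t := by
  rw [kappaStar]
  split_ifs with h₁ h₂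
  · rw [max_eq_left ((min_le_left _ _).trans h₁), kappaQuad]
  · rw [min_eq_left h₂, max_eq_right (not_le.1 h₁).le, kappaQuad_self (hem.trans (not_le.1 h₁))]
  · rw [min_eq_right (not_le.1 h₂).le, max_eq_right hemep, kappaQuad]

lemma kappaStar_le_kappaQuad {q em ep a t : ℝ} (hq : 0 < q) (hq2 : q ≤ 2) (hem : 0 < em)
    (hemep : em ≤ ep) (ha : a ∈ Set.Icc em ep) (ht : 0 ≤ t) :
    kappaStar q em ep t ≤ kappaQuad q a t := by
  rw [kappaStar_eq_kappaQuad hem hemep]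
  exact kappaQuad_le_kappaQuad_of_mem_uIcc hq hq2 (hem.trans_le ha.1)
    (hem.trans_le (max_min_mem_Icc hemep t).1) ht (max_min_mem_uIcc ha t)

lemma norm_sub_sq_add_two_inner_sub {E : Type*} [NormedAddCommGroup E] [InnerProductSpace ℝ E]
    (u v : E) : ‖u - v‖ ^ 2 + 2 * ⟪v, u - v⟫ = ‖u‖ ^ 2 - ‖v‖ ^ 2 := by
  rw [norm_sub_sq_real, inner_sub_right, real_inner_comm, real_inner_self_eq_norm_sq]
  ring

lemma half_mul_norm_sub_sq_add_inner_le_kappaStar_sub {E : Type*} [NormedAddCommGroup E]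
    [InnerProductSpace ℝ E] {q em ep : ℝ} (hq : 0 < q) (hq2 : q ≤ 2) (hem : 0 < em)
    (hemep : em ≤ ep) (u v : E) :
    (1/2) * ((max em (min ‖u‖ ep)) ^ (q-2) * ‖u - v‖ ^ 2)
        + (max em (min ‖u‖ ep)) ^ (q-2) * ⟪v, u - v⟫
      ≤ kappaStar q em ep ‖u‖ - kappaStar q em ep ‖v‖ := by
  have hv := kappaStar_le_kappaQuad hq hq2 hem hemep (max_min_mem_Icc hemep ‖u‖) (norm_nonneg v)
  have hid := norm_sub_sq_add_two_inner_sub u v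
  rw [kappaStar_eq_kappaQuad hem hemep ‖u‖]
  simp only [kappaQuad] at hv ⊢
  linear_combination hv + (1/2) * (max em (min ‖u‖ ep)) ^ (q-2) * hid

lemma exists_bound_rpow_max_min {em ep : ℝ} (hem : 0 < em) (hemep : em ≤ ep) (p : ℝ) :
    ∃ C, ∀ t, ‖(max em (min t ep)) ^ p‖ ≤ C := by
  obtain ⟨C, hC⟩ := isCompact_Icc.exists_bound_of_continuousOn
    (continuousOn_id.rpow_const fun a ha => Or.inl (hem.trans_le ha.1).ne')
  exact ⟨C, fun t => hC _ (max_min_mem_Icc hemep t)⟩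

section Integrability

variable {α E : Type*} [MeasurableSpace α] {μ : Measure α} [NormedAddCommGroup E]

lemma integrable_inner_of_memLp_two [InnerProductSpace ℝ E] {u v : α → E} (hu : MemLp u 2 μ)
    (hv : MemLp v 2 μ) :
    Integrable (fun x => ⟪u x, v x⟫) μ :=
  (L2.integrable_inner (hu.toLp u) (hv.toLp v)).congr <| by
    filter_upwards [hu.coeFn_toLp, hv.coeFn_toLp] with x hux hvx
    rw [hux, hvx]

lemma MeasureTheory.Integrable.max_min_rpow_mul {em ep : ℝ} (hem : 0 < em) (hemep : em ≤ ep)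
    (p : ℝ) {f g : α → ℝ} (hf : AEStronglyMeasurable f μ) (hg : Integrable g μ) :
    Integrable (fun x => (max em (min (f x) ep)) ^ p * g x) μ := by
  obtain ⟨C, hC⟩ := exists_bound_rpow_max_min hem hemep p
  have hcont : Continuous fun t : ℝ => (max em (min t ep)) ^ p :=
    (continuous_const.max (continuous_id.min continuous_const)).rpow_const
      fun t => Or.inl (hem.trans_le (le_max_left _ _)).ne'
  exact hg.bdd_mul (hcont.comp_aestronglyMeasurable hf) (ae_of_all _ fun x => hC (f x))

lemma integrable_kappaStar_norm [IsFiniteMeasure μ] {q em ep : ℝ} (hem : 0 < em)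
    (hemep : em ≤ ep) {f : α → E} (hf : MemLp f 2 μ) :
    Integrable (fun x => kappaStar q em ep ‖f x‖) μ := by
  have hf2 := (memLp_two_iff_integrable_sq_norm hf.1).1 hf
  have hquad := ((hf2.max_min_rpow_mul hem hemep (q-2) hf.1.norm).const_mul (1/2)).add
    (((integrable_const 1).max_min_rpow_mul hem hemep q hf.1.norm).const_mul (1/q - 1/2))
  refine hquad.congr (ae_of_all _ fun x => ?_)
  simp only [Pi.add_apply, kappaStar_eq_kappaQuad hem hemep, kappaQuad]
  ring

end Integrability

theorem stmt16_general (q em ep : ℝ) (hq1 : 1 < q) (hq2 : q < 2) (hem : 0 < em) (hemep : em ≤ ep)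
    {d : ℕ} (Ω : Set (EuclideanSpace ℝ (Fin d)))
    (hΩfin : volume Ω < ⊤)
    (τn τn1 : EuclideanSpace ℝ (Fin d) → EuclideanSpace ℝ (Fin d))
    (hτn : Measurable τn) (hτn1 : Measurable τn1)
    (hτn2 : IntegrableOn (fun x => ‖τn x‖ ^ 2) Ω volume)
    (hτn12 : IntegrableOn (fun x => ‖τn1 x‖ ^ 2) Ω volume)
    (horth : (∫ x in Ω, (max em (min ‖τn x‖ ep)) ^ (q-2) * ⟪τn1 x, τn x - τn1 x⟫) = 0) :
    (1/2) * (∫ x in Ω, (max em (min ‖τn x‖ ep)) ^ (q-2) * ‖τn x - τn1 x‖ ^ 2)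
      ≤ Jeps q em ep Ω τn - Jeps q em ep Ω τn1 := by
  have hq : 0 < q := by linarith
  have : IsFiniteMeasure (volume.restrict Ω) := isFiniteMeasure_restrict.2 hΩfin.ne
  have hu : MemLp τn 2 (volume.restrict Ω) :=
    (memLp_two_iff_integrable_sq_norm hτn.aestronglyMeasurable).2 hτn2
  have hv : MemLp τn1 2 (volume.restrict Ω) :=
    (memLp_two_iff_integrable_sq_norm hτn1.aestronglyMeasurable).2 hτn12
  have hd : MemLp (fun x => τn x - τn1 x) 2 (volume.restrict Ω) := hu.sub hv
  have hsq := ((memLp_two_iff_integrable_sq_norm hd.1).1 hd).max_min_rpow_mul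
    hem hemep (q-2) hu.1.norm
  have hinner := (integrable_inner_of_memLp_two hv hd).max_min_rpow_mul
    hem hemep (q-2) hu.1.norm
  have hJn := integrable_kappaStar_norm (q := q) hem hemep hu
  have hJn1 := integrable_kappaStar_norm (q := q) hem hemep hv
  calc (1/2) * (∫ x in Ω, (max em (min ‖τn x‖ ep)) ^ (q-2) * ‖τn x - τn1 x‖ ^ 2)
      = ∫ x in Ω, ((1/2) * ((max em (min ‖τn x‖ ep)) ^ (q-2) * ‖τn x - τn1 x‖ ^ 2)
          + (max em (min ‖τn x‖ ep)) ^ (q-2) * ⟪τn1 x, τn x - τn1 x⟫) := by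
        rw [integral_add (hsq.const_mul _) hinner, integral_const_mul, horth, add_zero]
    _ ≤ ∫ x in Ω, (kappaStar q em ep ‖τn x‖ - kappaStar q em ep ‖τn1 x‖) :=
        integral_mono ((hsq.const_mul _).add hinner) (hJn.sub hJn1) fun x =>
          half_mul_norm_sub_sq_add_inner_le_kappaStar_sub hq hq2.le hem hemep (τn x) (τn1 x)
    _ = Jeps q em ep Ω τn - Jeps q em ep Ω τn1 := integral_sub hJn hJn1

/-- first addend estimate in the proof of exponential decay.
For `1 < q < 2`, `0 < ε₋ ≤ ε₊ < ∞` and `Ω ⊂ ℝ^d` measurable of finite measure: if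
`τ_n, τ_{n+1} ∈ L²(Ω;ℝ^d)` and, with `w_n = clamp_ε(|τ_n|)^(q-2)`, the orthogonality
`∫_Ω w_n τ_{n+1}·(τ_n - τ_{n+1}) dx = 0` holds, then
`(1/2) ∫_Ω w_n |τ_n - τ_{n+1}|² dx ≤ J*_ε(τ_n) - J*_ε(τ_{n+1})`. -/
theorem stmt16 (q em ep : ℝ) (hq1 : 1 < q) (hq2 : q < 2) (hem : 0 < em) (hemep : em ≤ ep)
    {d : ℕ} (Ω : Set (EuclideanSpace ℝ (Fin d))) (hΩ : MeasurableSet Ω)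
    (hΩfin : volume Ω < ⊤)
    (τn τn1 : EuclideanSpace ℝ (Fin d) → EuclideanSpace ℝ (Fin d))
    (hτn : Measurable τn) (hτn1 : Measurable τn1)
    (hτn2 : IntegrableOn (fun x => ‖τn x‖ ^ 2) Ω volume)
    (hτn12 : IntegrableOn (fun x => ‖τn1 x‖ ^ 2) Ω volume)
    (horth : (∫ x in Ω, (max em (min ‖τn x‖ ep)) ^ (q-2) * ⟪τn1 x, τn x - τn1 x⟫) = 0) :
    (1/2) * (∫ x in Ω, (max em (min ‖τn x‖ ep)) ^ (q-2) * ‖τn x - τn1 x‖ ^ 2)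
      ≤ Jeps q em ep Ω τn - Jeps q em ep Ω τn1 :=
  stmt16_general q em ep hq1 hq2 hem hemep Ω hΩfin τn τn1 hτn hτn1 hτn2 hτn12 horth
end
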